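/- arXiv:2201.12293 — 7 statements merged into one kernel-verified Lean document; each statement's English description precedes it below -/
import Mathlib

section
/- Suppose x₁,…,xₙ are linearly independent. For any GRW iteration (with any admissible weight sequence qᵢ^{(t)} and any learning rate η > 0) such that the empirical risk R̂(θ^{(t)}) → 0 as t → ∞, the iterates θ^{(t)} converge to the unique vector θ* ∈ ℝ^d satisfying θ* − θ^{(0)} ∈ span{x₁,…,xₙ} and ⟨θ*, xᵢ⟩ = yᵢ for all i = 1,…,n; in particular the limit depends only on θ^{(0)} and on x₁,…,xₙ, y₁,…,yₙ, and not on the weights qᵢ^{(t)}. -/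
/-!
Each GRW step moves `θ` by a linear combination of the `xᵢ`, so `θ⁽ᵗ⁾ - θ⁽⁰⁾` stays in
`S = span {xᵢ}`. On `S` the map `v ↦ (⟪xᵢ, v⟫)ᵢ` is injective (a vector of `S` orthogonal to every
`xᵢ` is orthogonal to itself), hence a closed embedding since `S` is finite-dimensional; when the
`xᵢ` are independent it is moreover onto `ℝⁿ`, which yields the unique interpolator `θ*` in
`θ⁽⁰⁾ + S`. Vanishing risk forces every residual `⟪θ⁽ᵗ⁾ - θ*, xᵢ⟫` to zero, and the embedding
turns this into `θ⁽ᵗ⁾ → θ*`, whatever the weights.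
-/

open scoped RealInnerProductSpace
open Filter Topology Submodule

namespace InnerProductSpace

variable {E ι : Type*} [NormedAddCommGroup E] [InnerProductSpace ℝ E] (x : ι → E)

noncomputable def innerProducts : E →ₗ[ℝ] ι → ℝ := LinearMap.pi fun i => innerₗ E (x i)

variable {x} [Fintype ι]

theorem eq_zero_of_mem_span_of_inner_eq_zero {v : E} (hv : v ∈ span ℝ (Set.range x))
    (h : ∀ i, ⟪x i, v⟫ = 0) : v = 0 := by
  obtain ⟨c, hc⟩ := (mem_span_range_iff_exists_fun ℝ).mp hv
  rw [← inner_self_eq_zero (𝕜 := ℝ)]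
  nth_rewrite 1 [← hc]
  simp [sum_inner, real_inner_smul_left, h]

theorem ker_innerProducts_domRestrict :
    LinearMap.ker ((innerProducts x).domRestrict (span ℝ (Set.range x))) = ⊥ :=
  LinearMap.ker_eq_bot'.mpr fun v hv =>
    Subtype.ext (eq_zero_of_mem_span_of_inner_eq_zero v.2 (congrFun hv))

theorem eq_of_sub_mem_span_of_inner_eq {θ₀ θ₁ θ₂ : E} (h₁ : θ₁ - θ₀ ∈ span ℝ (Set.range x))
    (h₂ : θ₂ - θ₀ ∈ span ℝ (Set.range x)) (h : ∀ i, ⟪θ₁, x i⟫ = ⟪θ₂, x i⟫) : θ₁ = θ₂ := by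
  rw [← sub_eq_zero]
  refine eq_zero_of_mem_span_of_inner_eq_zero (by simpa using sub_mem h₁ h₂) fun i => ?_
  rw [inner_sub_right, real_inner_comm, h, real_inner_comm, sub_self]

theorem tendsto_zero_of_mem_span_of_tendsto_inner {α : Type*} {l : Filter α} {f : α → E}
    (hf : ∀ a, f a ∈ span ℝ (Set.range x)) (h : ∀ i, Tendsto (fun a => ⟪x i, f a⟫) l (𝓝 0)) :
    Tendsto f l (𝓝 0) := by
  have := FiniteDimensional.span_of_finite ℝ (Set.finite_range x)
  have hemb := (LinearMap.isClosedEmbedding_of_injective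
    (ker_innerProducts_domRestrict (x := x))).isEmbedding
  have hrestrict : Tendsto (fun a => (⟨f a, hf a⟩ : span ℝ (Set.range x))) l (𝓝 0) := by
    rw [hemb.tendsto_nhds_iff, map_zero]
    exact tendsto_pi_nhds.mpr h
  exact (continuous_subtype_val.tendsto 0).comp hrestrict

theorem exists_mem_span_inner_eq (hx : LinearIndependent ℝ x) (b : ι → ℝ) :
    ∃ v ∈ span ℝ (Set.range x), ∀ i, ⟪x i, v⟫ = b i := by
  have := FiniteDimensional.span_of_finite ℝ (Set.finite_range x)
  have hinj := LinearMap.ker_eq_bot.mp (ker_innerProducts_domRestrict (x := x))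
  have hrank : Module.finrank ℝ (span ℝ (Set.range x)) = Module.finrank ℝ (ι → ℝ) := by
    simp [finrank_span_eq_card hx]
  obtain ⟨v, hv⟩ := (LinearMap.injective_iff_surjective_of_finrank_eq_finrank hrank).mp hinj b
  exact ⟨v, v.2, congrFun hv⟩

end InnerProductSpace

open InnerProductSpace

theorem grw_sub_mem_span {E ι : Type*} [NormedAddCommGroup E] [InnerProductSpace ℝ E]
    [Fintype ι] {x : ι → E} {y : ι → ℝ} {q : ℕ → ι → ℝ} {η : ℝ} {θ : ℕ → E}
    (hupd : ∀ t, θ (t + 1) = θ t - η • ∑ i, (q t i * (⟪θ t, x i⟫ - y i)) • x i) (t : ℕ) :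
    θ t - θ 0 ∈ span ℝ (Set.range x) := by
  induction t with
  | zero => simp
  | succ t ih =>
    rw [hupd, sub_right_comm]
    exact sub_mem ih <| smul_mem _ _ <| sum_mem fun i _ => smul_mem _ _ <| subset_span ⟨i, rfl⟩

theorem tendsto_of_tendsto_empiricalRisk {n : ℕ} {α : Type*} {l : Filter α} {r : α → Fin n → ℝ}
    (h : Tendsto (fun a => (1 / (n : ℝ)) * ∑ i, (1 / 2) * r a i ^ 2) l (𝓝 0)) (i : Fin n) :
    Tendsto (fun a => r a i) l (𝓝 0) := by
  have hn : (0 : ℝ) < n := by exact_mod_cast i.pos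
  have hsq : Tendsto (fun a => r a i ^ 2) l (𝓝 0) := by
    refine squeeze_zero (fun _ => sq_nonneg _) (fun a => ?_)
      (by simpa only [mul_zero] using h.const_mul (2 * n : ℝ))
    calc r a i ^ 2 = 2 * ((1 / 2) * r a i ^ 2) := by ring
      _ ≤ 2 * ∑ j, (1 / 2) * r a j ^ 2 := by
        gcongr
        exact Finset.single_le_sum (f := fun j => (1 / 2) * r a j ^ 2)
          (fun j _ => by positivity) (Finset.mem_univ i)
      _ = 2 * n * ((1 / (n : ℝ)) * ∑ j, (1 / 2) * r a j ^ 2) := by field_simp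
  rw [tendsto_zero_iff_abs_tendsto_zero]
  simpa [Real.sqrt_sq_eq_abs, Function.comp_def] using hsq.sqrt

theorem stmt_0_general {d n : ℕ}
    (x : Fin n → EuclideanSpace ℝ (Fin d))
    (y : Fin n → ℝ)
    (hli : LinearIndependent ℝ x)
    (q : ℕ → Fin n → ℝ)
    (η : ℝ)
    (θ : ℕ → EuclideanSpace ℝ (Fin d))
    (hupd : ∀ t, θ (t + 1) = θ t - η • ∑ i, (q t i * (⟪θ t, x i⟫ - y i)) • x i)
    (hrisk : Tendsto (fun t => (1 / (n : ℝ)) * ∑ i, (1 / 2) * (⟪θ t, x i⟫ - y i) ^ 2)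
      atTop (nhds 0)) :
    ∃ θstar : EuclideanSpace ℝ (Fin d),
      (θstar - θ 0 ∈ Submodule.span ℝ (Set.range x) ∧ ∀ i, ⟪θstar, x i⟫ = y i) ∧
      (∀ θ' : EuclideanSpace ℝ (Fin d),
        θ' - θ 0 ∈ Submodule.span ℝ (Set.range x) → (∀ i, ⟪θ', x i⟫ = y i) → θ' = θstar) ∧
      Tendsto θ atTop (nhds θstar) := by
  obtain ⟨s, hsS, hs⟩ := exists_mem_span_inner_eq hli fun i => y i - ⟪x i, θ 0⟫
  have hspan : θ 0 + s - θ 0 ∈ span ℝ (Set.range x) := by simpa using hsS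
  have hinterp (i : Fin n) : ⟪θ 0 + s, x i⟫ = y i := by
    rw [real_inner_comm, inner_add_right, hs i]
    ring
  refine ⟨θ 0 + s, ⟨hspan, hinterp⟩,
    fun θ' h' hθ' => eq_of_sub_mem_span_of_inner_eq h' hspan fun i => by rw [hθ', hinterp], ?_⟩
  rw [← tendsto_sub_nhds_zero_iff]
  refine tendsto_zero_of_mem_span_of_tendsto_inner (x := x) (fun t => ?_) fun i => ?_
  · rw [← sub_sub]
    exact sub_mem (grw_sub_mem_span hupd t) hsS
  · have hresidual (t : ℕ) : ⟪x i, θ t - (θ 0 + s)⟫ = ⟪θ t, x i⟫ - y i := by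
      rw [inner_sub_right, real_inner_comm (x i) (θ t), real_inner_comm (θ 0 + s) (x i), hinterp]
    simpa only [hresidual] using tendsto_of_tendsto_empiricalRisk hrisk i

/-- For linearly independent data, any GRW iteration with the squared
loss whose empirical risk tends to zero converges to the unique interpolator
`θ*` with `θ* - θ⁰ ∈ span{x₁,…,xₙ}` and `⟨θ*, xᵢ⟩ = yᵢ`; in particular the limit
does not depend on the weights. -/
theorem stmt_0 {d n : ℕ} (hn : 0 < n)
    (x : Fin n → EuclideanSpace ℝ (Fin d)) (hx : ∀ i, ‖x i‖ ≤ 1)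
    (y : Fin n → ℝ)
    (hli : LinearIndependent ℝ x)
    (q : ℕ → Fin n → ℝ)
    (hq0 : ∀ t i, 0 ≤ q t i)
    (hq1 : ∀ t, ∑ i, q t i = 1)
    (η : ℝ) (hη : 0 < η)
    (θ : ℕ → EuclideanSpace ℝ (Fin d))
    (hupd : ∀ t, θ (t + 1) = θ t - η • ∑ i, (q t i * (⟪θ t, x i⟫ - y i)) • x i)
    (hrisk : Tendsto (fun t => (1 / (n : ℝ)) * ∑ i, (1 / 2) * (⟪θ t, x i⟫ - y i) ^ 2)
      atTop (nhds 0)) :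
    ∃ θstar : EuclideanSpace ℝ (Fin d),
      (θstar - θ 0 ∈ Submodule.span ℝ (Set.range x) ∧ ∀ i, ⟪θstar, x i⟫ = y i) ∧
      (∀ θ' : EuclideanSpace ℝ (Fin d),
        θ' - θ 0 ∈ Submodule.span ℝ (Set.range x) → (∀ i, ⟪θ', x i⟫ = y i) → θ' = θstar) ∧
      Tendsto θ atTop (nhds θstar) :=
  stmt_0_general x y hli q η θ hupd hrisk
end

section
/- Suppose x₁,…,xₙ are linearly independent and the weights of the GRW iteration satisfy Assumption 1. Then there exists η₀ > 0 such that for every learning rate 0 < η ≤ η₀ and every initialization θ^{(0)}, the empirical risk of the GRW iteration satisfies R̂(θ^{(t)}) → 0 as t → ∞. -/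
/-!
Linear independence gives an interpolating `θ⋆` with `⟪θ⋆, xᵢ⟫ = yᵢ`, so the residuals of the
iterates are `⟪θₜ - θ⋆, xᵢ⟫`. Since `‖xᵢ‖ ≤ 1` and the weights are a probability vector, the
weighted gradient `wₜ` satisfies `⟪θₜ - θ⋆, wₜ⟫ = Sₜ` and `‖wₜ‖² ≤ Sₜ`, where `Sₜ` is the weighted
loss; hence for `η ≤ 1` the squared distance to `θ⋆` drops by at least `η Sₜ` per step. The `Sₜ`
are therefore summable and tend to `0`, and because every limiting weight is positive each single
residual tends to `0`.
-/

open scoped RealInnerProductSpace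
open Filter Topology

theorem tendsto_atTop_zero_of_le_sub_mul {a s : ℕ → ℝ} {η : ℝ} (hη : 0 < η)
    (ha : ∀ t, 0 ≤ a t) (hs : ∀ t, 0 ≤ s t) (h : ∀ t, a (t + 1) ≤ a t - η * s t) :
    Tendsto s atTop (𝓝 0) := by
  have htelescope : ∀ N, η * ∑ t ∈ Finset.range N, s t ≤ a 0 - a N := by
    intro N
    induction N with
    | zero => simp
    | succ N ih => rw [Finset.sum_range_succ, mul_add]; linarith [h N]
  refine (summable_of_sum_range_le hs (c := a 0 / η) fun N => ?_).tendsto_atTop_zero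
  rw [le_div_iff₀ hη, mul_comm]
  linarith [htelescope N, ha N]

theorem tendsto_atTop_zero_of_tendsto_mul {q u : ℕ → ℝ} {c : ℝ} (hc : c ≠ 0)
    (hq : Tendsto q atTop (𝓝 c)) (hqu : Tendsto (fun t => q t * u t) atTop (𝓝 0)) :
    Tendsto u atTop (𝓝 0) := by
  have hquot : ∀ᶠ t in atTop, q t * u t / q t = u t := by
    filter_upwards [hq.eventually_ne hc] with t ht
    rw [mul_div_cancel_left₀ _ ht]
  simpa using (hqu.div hq hc).congr' hquot

section

variable {E ι : Type*} [NormedAddCommGroup E] [InnerProductSpace ℝ E]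

/-- Riesz representation inside the finite-dimensional (hence complete) span of the `x i`. -/
theorem LinearIndependent.exists_inner_eq [Finite ι] {x : ι → E} (hli : LinearIndependent ℝ x)
    (y : ι → ℝ) : ∃ θ : E, ∀ i, ⟪θ, x i⟫ = y i := by
  set W := Submodule.span ℝ (Set.range x)
  have : FiniteDimensional ℝ W := (Module.Basis.span hli).finiteDimensional_of_finite
  let f : StrongDual ℝ W := LinearMap.toContinuousLinearMap ((Module.Basis.span hli).constr ℝ y)
  refine ⟨((InnerProductSpace.toDual ℝ W).symm f : W), fun i => ?_⟩
  rw [← Module.Basis.coe_span_apply hli, ← Submodule.coe_inner,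
    InnerProductSpace.toDual_symm_apply]
  exact (Module.Basis.span hli).constr_basis ℝ y i

variable [Fintype ι]

theorem norm_sum_mul_smul_sq_le {x : ι → E} (hx : ∀ i, ‖x i‖ ≤ 1) {q : ι → ℝ}
    (hq0 : ∀ i, 0 ≤ q i) (hq1 : ∑ i, q i = 1) (r : ι → ℝ) :
    ‖∑ i, (q i * r i) • x i‖ ^ 2 ≤ ∑ i, q i * r i ^ 2 := by
  have hconvex : ConvexOn ℝ Set.univ fun v : E => ‖v‖ ^ 2 :=
    convexOn_univ_norm.pow (fun _ _ => norm_nonneg _) 2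
  calc ‖∑ i, (q i * r i) • x i‖ ^ 2 = ‖∑ i, q i • (r i • x i)‖ ^ 2 := by simp only [mul_smul]
    _ ≤ ∑ i, q i • ‖r i • x i‖ ^ 2 :=
      hconvex.map_sum_le (fun i _ => hq0 i) hq1 fun _ _ => Set.mem_univ _
    _ ≤ ∑ i, q i * r i ^ 2 := by
      gcongr with i
      rw [smul_eq_mul, norm_smul, mul_pow, Real.norm_eq_abs, sq_abs]
      exact mul_le_mul_of_nonneg_left
        (mul_le_of_le_one_right (sq_nonneg _) (pow_le_one₀ (norm_nonneg _) (hx i))) (hq0 i)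

theorem norm_sub_sq_le_of_gradient_step {x : ι → E} (hx : ∀ i, ‖x i‖ ≤ 1) {q : ι → ℝ}
    (hq0 : ∀ i, 0 ≤ q i) (hq1 : ∑ i, q i = 1) {y : ι → ℝ} {θs : E} (hθs : ∀ i, ⟪θs, x i⟫ = y i)
    {η : ℝ} (hη : 0 < η) (hη1 : η ≤ 1) (θ : E) :
    ‖θ - η • ∑ i, (q i * (⟪θ, x i⟫ - y i)) • x i - θs‖ ^ 2
      ≤ ‖θ - θs‖ ^ 2 - η * ∑ i, q i * (⟪θ, x i⟫ - y i) ^ 2 := by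
  set w := ∑ i, (q i * (⟪θ, x i⟫ - y i)) • x i
  set S := ∑ i, q i * (⟪θ, x i⟫ - y i) ^ 2
  have hS0 : 0 ≤ S := Finset.sum_nonneg fun i _ => mul_nonneg (hq0 i) (sq_nonneg _)
  have hinner : ⟪θ - θs, w⟫ = S := by
    simp only [w, S, inner_sum, real_inner_smul_right, inner_sub_left, hθs]
    exact Finset.sum_congr rfl fun i _ => by ring
  have hw : ‖w‖ ^ 2 ≤ S := norm_sum_mul_smul_sq_le hx hq0 hq1 _
  calc ‖θ - η • w - θs‖ ^ 2 = ‖θ - θs‖ ^ 2 - 2 * η * S + η ^ 2 * ‖w‖ ^ 2 := by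
        rw [sub_right_comm, norm_sub_sq_real, real_inner_smul_right, hinner, norm_smul,
          Real.norm_eq_abs, abs_of_pos hη]
        ring
    _ ≤ ‖θ - θs‖ ^ 2 - η * S := by
        have hsmall : η ^ 2 * ‖w‖ ^ 2 ≤ η * S :=
          calc η ^ 2 * ‖w‖ ^ 2 ≤ η ^ 2 * S := by gcongr
            _ ≤ η * S := by gcongr; nlinarith
        linarith

end

theorem stmt_2_general {d n : ℕ}
    (x : Fin n → EuclideanSpace ℝ (Fin d)) (hx : ∀ i, ‖x i‖ ≤ 1)
    (y : Fin n → ℝ)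
    (hli : LinearIndependent ℝ x)
    (q : ℕ → Fin n → ℝ)
    (hq0 : ∀ t i, 0 ≤ q t i)
    (hq1 : ∀ t, ∑ i, q t i = 1)
    (qlim : Fin n → ℝ)
    (hqlim : ∀ i, Tendsto (fun t => q t i) atTop (nhds (qlim i)))
    (hqpos : ∀ i, 0 < qlim i) :
    ∃ η₀ > (0 : ℝ), ∀ η : ℝ, 0 < η → η ≤ η₀ →
      ∀ θ : ℕ → EuclideanSpace ℝ (Fin d),
        (∀ t, θ (t + 1) = θ t - η • ∑ i, (q t i * (⟪θ t, x i⟫ - y i)) • x i) →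
        Tendsto (fun t => (1 / (n : ℝ)) * ∑ i, (1 / 2) * (⟪θ t, x i⟫ - y i) ^ 2)
          atTop (nhds 0) := by
  obtain ⟨θs, hθs⟩ := hli.exists_inner_eq y
  refine ⟨1, one_pos, fun η hη hη1 θ hθ => ?_⟩
  set S := fun t => ∑ i, q t i * (⟪θ t, x i⟫ - y i) ^ 2
  have hterm_le : ∀ t i, q t i * (⟪θ t, x i⟫ - y i) ^ 2 ≤ S t := fun t i =>
    Finset.single_le_sum (f := fun j => q t j * (⟪θ t, x j⟫ - y j) ^ 2) (fun j _ => mul_nonneg (hq0 t j) (sq_nonneg _)) (Finset.mem_univ i)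
  have hS : Tendsto S atTop (𝓝 0) := by
    refine tendsto_atTop_zero_of_le_sub_mul hη (a := fun t => ‖θ t - θs‖ ^ 2)
      (fun _ => sq_nonneg _) (fun t => Finset.sum_nonneg fun i _ => ?_) fun t => ?_
    · exact mul_nonneg (hq0 t i) (sq_nonneg _)
    · rw [hθ t]
      exact norm_sub_sq_le_of_gradient_step hx (hq0 t) (hq1 t) hθs hη hη1 (θ t)
  have hresidual : ∀ i, Tendsto (fun t => (⟪θ t, x i⟫ - y i) ^ 2) atTop (𝓝 0) := fun i =>
    tendsto_atTop_zero_of_tendsto_mul (hqpos i).ne' (hqlim i) <|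
      squeeze_zero (fun t => mul_nonneg (hq0 t i) (sq_nonneg _)) (fun t => hterm_le t i) hS
  simpa using (tendsto_finsetSum Finset.univ fun i _ => (hresidual i).const_mul (1 / 2 : ℝ)).const_mul
    (1 / (n : ℝ))

/-- For linearly independent data and GRW weights satisfying
Assumption 1 (weights converge to limits with positive minimum), there is
`η₀ > 0` such that for every learning rate `0 < η ≤ η₀` and every
initialization, the empirical risk of the GRW iteration tends to `0`. -/
theorem stmt_2 {d n : ℕ} (hn : 0 < n)
    (x : Fin n → EuclideanSpace ℝ (Fin d)) (hx : ∀ i, ‖x i‖ ≤ 1)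
    (y : Fin n → ℝ)
    (hli : LinearIndependent ℝ x)
    (q : ℕ → Fin n → ℝ)
    (hq0 : ∀ t i, 0 ≤ q t i)
    (hq1 : ∀ t, ∑ i, q t i = 1)
    (qlim : Fin n → ℝ)
    (hqlim : ∀ i, Tendsto (fun t => q t i) atTop (nhds (qlim i)))
    (hqpos : ∀ i, 0 < qlim i) :
    ∃ η₀ > (0 : ℝ), ∀ η : ℝ, 0 < η → η ≤ η₀ →
      ∀ θ : ℕ → EuclideanSpace ℝ (Fin d),
        (∀ t, θ (t + 1) = θ t - η • ∑ i, (q t i * (⟪θ t, x i⟫ - y i)) • x i) →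
        Tendsto (fun t => (1 / (n : ℝ)) * ∑ i, (1 / 2) * (⟪θ t, x i⟫ - y i) ^ 2)
          atTop (nhds 0) :=
  stmt_2_general x hx y hli q hq0 hq1 qlim hqlim hqpos
end

section
/- Let q₁,…,qₙ ≥ 0 with Σᵢ qᵢ = 1 and q* := minᵢ qᵢ > 0, and suppose x₁,…,xₙ are linearly independent, so that λ_min > 0. For every η > 0 and every θ ∈ ℝ^d, the updated point θ' = θ − η Σᵢ qᵢ xᵢ (⟨θ,xᵢ⟩ − yᵢ) satisfies F(θ') ≤ (1 − 2η q* λ_min + A² η²) F(θ). Consequently, for every 0 < η ≤ q* λ_min / A², the static GRW iterates with weights qᵢ^{(t)} ≡ qᵢ satisfy F(θ^{(t+1)}) ≤ (1 − η q* λ_min) F(θ^{(t)}) for all t, and hence F(θ^{(t)}) → 0 as t → ∞. -/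
/-!
Write `rᵢ = ⟪θ, xᵢ⟫ - yᵢ` and `g = ∑ᵢ qᵢ rᵢ xᵢ` (half the gradient of `F`). Then
`F(θ - η g) = F(θ) - 2η‖g‖² + η² ∑ᵢ qᵢ ⟪g, xᵢ⟫²`. Since `‖g‖²` is the Gram quadratic form of the
weights `qᵢ rᵢ`, it is at least `λ_min ∑ᵢ (qᵢ rᵢ)² ≥ q* λ_min F(θ)`, while Cauchy–Schwarz bounds
the second-order term by `A ‖g‖² ≤ A² F(θ)`. For `η ≤ q* λ_min / A²` the factor is at most
`1 - η q* λ_min < 1`, so `F` decays geometrically along the iterates.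
-/

open scoped RealInnerProductSpace MatrixOrder
open Filter Matrix

lemma Matrix.IsHermitian.mul_dotProduct_self_le_dotProduct_mulVec {ι : Type*} [Fintype ι]
    [DecidableEq ι] {G : Matrix ι ι ℝ} (hG : G.IsHermitian) {lam : ℝ}
    (hlam : ∀ i, lam ≤ hG.eigenvalues i) (w : ι → ℝ) :
    lam * (w ⬝ᵥ w) ≤ w ⬝ᵥ G *ᵥ w := by
  have hle : algebraMap ℝ (Matrix ι ι ℝ) lam ≤ G := by
    refine algebraMap_le_of_le_spectrum (fun r hr => ?_) hG
    rw [hG.spectrum_real_eq_range_eigenvalues] at hr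
    obtain ⟨i, rfl⟩ := hr
    exact hlam i
  simpa [sub_mulVec, Algebra.algebraMap_eq_smul_one, smul_mulVec, dotProduct_sub] using
    (Matrix.le_iff.mp hle).dotProduct_mulVec_nonneg w

lemma tendsto_zero_of_le_mul_of_lt_one {u : ℕ → ℝ} {ρ : ℝ} (hu : ∀ n, 0 ≤ u n) (hρ : ρ < 1)
    (h : ∀ n, u (n + 1) ≤ ρ * u n) : Tendsto u atTop (nhds 0) := by
  have hc0 : 0 ≤ max ρ 0 := le_max_right _ _
  have hgeom : ∀ n, u n ≤ max ρ 0 ^ n * u 0 := fun n =>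
    le_geom hc0 n fun k _ => (h k).trans (mul_le_mul_of_nonneg_right (le_max_left _ _) (hu k))
  refine squeeze_zero hu hgeom ?_
  simpa using (tendsto_pow_atTop_nhds_zero_of_lt_one hc0 (max_lt hρ one_pos)).mul_const (u 0)

section InnerProductSpace

variable {ι E : Type*} [Fintype ι] [NormedAddCommGroup E] [InnerProductSpace ℝ E]

lemma norm_sum_smul_sq_le (c : ι → ℝ) (x : ι → E) :
    ‖∑ i, c i • x i‖ ^ 2 ≤ (∑ i, c i ^ 2) * ∑ i, ‖x i‖ ^ 2 := by
  have hnorm : ‖∑ i, c i • x i‖ ≤ ∑ i, |c i| * ‖x i‖ :=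
    (norm_sum_le _ _).trans_eq (by simp only [norm_smul, Real.norm_eq_abs])
  calc ‖∑ i, c i • x i‖ ^ 2 ≤ (∑ i, |c i| * ‖x i‖) ^ 2 := by gcongr
    _ ≤ (∑ i, |c i| ^ 2) * ∑ i, ‖x i‖ ^ 2 := Finset.sum_mul_sq_le_sq_mul_sq _ _ _
    _ = (∑ i, c i ^ 2) * ∑ i, ‖x i‖ ^ 2 := by simp only [sq_abs]

lemma sum_mul_inner_sq_le {q : ι → ℝ} (hq1 : ∀ i, q i ≤ 1) (v : E)
    (x : ι → E) : ∑ i, q i * ⟪v, x i⟫ ^ 2 ≤ ‖v‖ ^ 2 * ∑ i, ‖x i‖ ^ 2 := by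
  rw [Finset.mul_sum]
  refine Finset.sum_le_sum fun i _ => ?_
  calc q i * ⟪v, x i⟫ ^ 2 ≤ 1 * ⟪v, x i⟫ ^ 2 := by gcongr; exact hq1 i
    _ ≤ (‖v‖ * ‖x i‖) ^ 2 := by
      rw [one_mul, sq_le_sq, abs_mul, abs_norm, abs_norm]
      exact abs_real_inner_le_norm v (x i)
    _ = ‖v‖ ^ 2 * ‖x i‖ ^ 2 := mul_pow _ _ _

lemma mul_sum_sq_le_norm_sum_smul_sq [DecidableEq ι] {x : ι → E} (hG : (gram ℝ x).IsHermitian)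
    {lam : ℝ} (hlam : ∀ i, lam ≤ hG.eigenvalues i) (c : ι → ℝ) :
    lam * ∑ i, c i ^ 2 ≤ ‖∑ i, c i • x i‖ ^ 2 := by
  have := hG.mul_dotProduct_self_le_dotProduct_mulVec hlam c
  rw [← star_trivial c, star_dotProduct_gram_mulVec, star_trivial, real_inner_self_eq_norm_sq]
    at this
  simpa only [dotProduct, ← sq] using this

def weightedRisk (q : ι → ℝ) (x : ι → E) (y : ι → ℝ) (θ : E) : ℝ :=
  ∑ i, q i * (⟪θ, x i⟫ - y i) ^ 2

def weightedRiskHalfGrad (q : ι → ℝ) (x : ι → E) (y : ι → ℝ) (θ : E) : E :=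
  ∑ i, (q i * (⟪θ, x i⟫ - y i)) • x i

variable {q : ι → ℝ} {x : ι → E} {y : ι → ℝ}

lemma weightedRisk_nonneg (hq0 : ∀ i, 0 ≤ q i) (θ : E) : 0 ≤ weightedRisk q x y θ :=
  Finset.sum_nonneg fun i _ => mul_nonneg (hq0 i) (sq_nonneg _)

lemma weightedRisk_sub_smul_weightedRiskHalfGrad (η : ℝ) (θ : E) :
    weightedRisk q x y (θ - η • weightedRiskHalfGrad q x y θ) = weightedRisk q x y θ
      - 2 * η * ‖weightedRiskHalfGrad q x y θ‖ ^ 2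
      + η ^ 2 * ∑ i, q i * ⟪weightedRiskHalfGrad q x y θ, x i⟫ ^ 2 := by
  set g := weightedRiskHalfGrad q x y θ
  have hfirst : ∑ i, q i * (⟪θ, x i⟫ - y i) * ⟪g, x i⟫ = ‖g‖ ^ 2 :=
    calc ∑ i, q i * (⟪θ, x i⟫ - y i) * ⟪g, x i⟫ = ⟪g, ∑ i, (q i * (⟪θ, x i⟫ - y i)) • x i⟫ := by
          simp only [inner_sum, real_inner_smul_right]
      _ = ‖g‖ ^ 2 := real_inner_self_eq_norm_sq g
  unfold weightedRisk
  rw [← hfirst, Finset.mul_sum, Finset.mul_sum, ← Finset.sum_sub_distrib,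
    ← Finset.sum_add_distrib]
  refine Finset.sum_congr rfl fun i _ => ?_
  rw [inner_sub_left, real_inner_smul_left]
  ring

lemma norm_sq_weightedRiskHalfGrad_le (hq0 : ∀ i, 0 ≤ q i) (hq1 : ∀ i, q i ≤ 1) (θ : E) :
    ‖weightedRiskHalfGrad q x y θ‖ ^ 2 ≤ (∑ i, ‖x i‖ ^ 2) * weightedRisk q x y θ := by
  calc ‖weightedRiskHalfGrad q x y θ‖ ^ 2
      ≤ (∑ i, (q i * (⟪θ, x i⟫ - y i)) ^ 2) * ∑ i, ‖x i‖ ^ 2 := norm_sum_smul_sq_le _ _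
    _ ≤ weightedRisk q x y θ * ∑ i, ‖x i‖ ^ 2 := by
      gcongr
      refine Finset.sum_le_sum fun i _ => ?_
      calc (q i * (⟪θ, x i⟫ - y i)) ^ 2 = q i * (q i * (⟪θ, x i⟫ - y i) ^ 2) := by ring
        _ ≤ 1 * (q i * (⟪θ, x i⟫ - y i) ^ 2) := by
          gcongr
          · exact mul_nonneg (hq0 i) (sq_nonneg _)
          · exact hq1 i
        _ = q i * (⟪θ, x i⟫ - y i) ^ 2 := one_mul _
    _ = (∑ i, ‖x i‖ ^ 2) * weightedRisk q x y θ := mul_comm _ _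

lemma mul_weightedRisk_le_norm_sq_weightedRiskHalfGrad [DecidableEq ι] (hq0 : ∀ i, 0 ≤ q i)
    {qmin : ℝ} (hqmin : ∀ i, qmin ≤ q i) (hG : (gram ℝ x).IsHermitian) {lam : ℝ}
    (hlam : ∀ i, lam ≤ hG.eigenvalues i) (hlam0 : 0 ≤ lam) (θ : E) :
    qmin * lam * weightedRisk q x y θ ≤ ‖weightedRiskHalfGrad q x y θ‖ ^ 2 := by
  calc qmin * lam * weightedRisk q x y θ
      = lam * ∑ i, qmin * (q i * (⟪θ, x i⟫ - y i) ^ 2) := by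
        simp only [weightedRisk, Finset.mul_sum]
        exact Finset.sum_congr rfl fun i _ => by ring
    _ ≤ lam * ∑ i, (q i * (⟪θ, x i⟫ - y i)) ^ 2 := by
      gcongr with i
      calc qmin * (q i * (⟪θ, x i⟫ - y i) ^ 2) ≤ q i * (q i * (⟪θ, x i⟫ - y i) ^ 2) := by
            gcongr
            · exact mul_nonneg (hq0 i) (sq_nonneg _)
            · exact hqmin i
        _ = (q i * (⟪θ, x i⟫ - y i)) ^ 2 := by ring
    _ ≤ ‖weightedRiskHalfGrad q x y θ‖ ^ 2 := mul_sum_sq_le_norm_sum_smul_sq hG hlam _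

lemma weightedRisk_sub_smul_weightedRiskHalfGrad_le [DecidableEq ι] (hq0 : ∀ i, 0 ≤ q i)
    (hq1 : ∀ i, q i ≤ 1) {qmin : ℝ} (hqmin : ∀ i, qmin ≤ q i) (hG : (gram ℝ x).IsHermitian)
    {lam : ℝ} (hlam : ∀ i, lam ≤ hG.eigenvalues i) (hlam0 : 0 ≤ lam) {η : ℝ} (hη : 0 ≤ η)
    (θ : E) :
    weightedRisk q x y (θ - η • weightedRiskHalfGrad q x y θ)
      ≤ (1 - 2 * η * qmin * lam + (∑ i, ‖x i‖ ^ 2) ^ 2 * η ^ 2) * weightedRisk q x y θ := by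
  set A := ∑ i, ‖x i‖ ^ 2
  set g := weightedRiskHalfGrad q x y θ
  have hA : 0 ≤ A := Finset.sum_nonneg fun i _ => sq_nonneg _
  have hlower := mul_weightedRisk_le_norm_sq_weightedRiskHalfGrad (y := y) hq0 hqmin hG hlam
    hlam0 θ
  have hupper := norm_sq_weightedRiskHalfGrad_le (x := x) (y := y) hq0 hq1 θ
  have hsecond : ∑ i, q i * ⟪g, x i⟫ ^ 2 ≤ A ^ 2 * weightedRisk q x y θ :=
    calc ∑ i, q i * ⟪g, x i⟫ ^ 2 ≤ ‖g‖ ^ 2 * A := sum_mul_inner_sq_le hq1 g x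
      _ ≤ A * weightedRisk q x y θ * A := by gcongr
      _ = A ^ 2 * weightedRisk q x y θ := by ring
  rw [weightedRisk_sub_smul_weightedRiskHalfGrad]
  nlinarith [mul_le_mul_of_nonneg_left hlower hη, mul_le_mul_of_nonneg_left hsecond (sq_nonneg η)]

end InnerProductSpace

theorem stmt_3_general {d n : ℕ}
    (x : Fin n → EuclideanSpace ℝ (Fin d)) (y : Fin n → ℝ)
    (q : Fin n → ℝ) (hq0 : ∀ i, 0 ≤ q i) (hq1 : ∑ i, q i = 1)
    (qstar : ℝ) (hqstar : qstar = ⨅ i, q i) (hqpos : 0 < qstar)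
    (hG : (Matrix.of fun i j => ⟪x i, x j⟫ : Matrix (Fin n) (Fin n) ℝ).IsHermitian)
    (lammin : ℝ) (hlam : lammin = ⨅ i, hG.eigenvalues i) (hlampos : 0 < lammin)
    (A : ℝ) (hA : A = ∑ i, ‖x i‖ ^ 2) :
    (∀ η : ℝ, 0 < η → ∀ θ : EuclideanSpace ℝ (Fin d),
      (∑ i, q i * (⟪θ - η • ∑ j, (q j * (⟪θ, x j⟫ - y j)) • x j, x i⟫ - y i) ^ 2)
        ≤ (1 - 2 * η * qstar * lammin + A ^ 2 * η ^ 2) * ∑ i, q i * (⟪θ, x i⟫ - y i) ^ 2) ∧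
    (∀ η : ℝ, 0 < η → η ≤ qstar * lammin / A ^ 2 →
      ∀ θ : ℕ → EuclideanSpace ℝ (Fin d),
        (∀ t, θ (t + 1) = θ t - η • ∑ i, (q i * (⟪θ t, x i⟫ - y i)) • x i) →
        (∀ t, (∑ i, q i * (⟪θ (t + 1), x i⟫ - y i) ^ 2)
            ≤ (1 - η * qstar * lammin) * ∑ i, q i * (⟪θ t, x i⟫ - y i) ^ 2) ∧
          Tendsto (fun t => ∑ i, q i * (⟪θ t, x i⟫ - y i) ^ 2) atTop (nhds 0)) := by
  have hq_le_one : ∀ i, q i ≤ 1 := fun i =>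
    hq1 ▸ Finset.single_le_sum (fun j _ => hq0 j) (Finset.mem_univ i)
  have hqstar_le : ∀ i, qstar ≤ q i := fun i => hqstar ▸ ciInf_le (Finite.bddBelow_range _) i
  have hlam_le : ∀ i, lammin ≤ hG.eigenvalues i := fun i =>
    hlam ▸ ciInf_le (Finite.bddBelow_range _) i
  have hstep : ∀ η : ℝ, 0 < η → ∀ θ, weightedRisk q x y (θ - η • weightedRiskHalfGrad q x y θ)
      ≤ (1 - 2 * η * qstar * lammin + A ^ 2 * η ^ 2) * weightedRisk q x y θ := fun η hη θ =>
    hA ▸ weightedRisk_sub_smul_weightedRiskHalfGrad_le hq0 hq_le_one hqstar_le hG hlam_le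
      hlampos.le hη.le θ
  refine ⟨hstep, fun η hη hηA θ hθ => ?_⟩
  have hAη : η * A ^ 2 ≤ qstar * lammin := by
    rcases (sq_nonneg A).eq_or_lt with hA0 | hA0
    · rw [← hA0, mul_zero]
      positivity
    · exact (le_div_iff₀ hA0).mp hηA
  have hrate : 1 - 2 * η * qstar * lammin + A ^ 2 * η ^ 2 ≤ 1 - η * qstar * lammin := by
    nlinarith [mul_le_mul_of_nonneg_left hAη hη.le]
  have hdescent : ∀ t, weightedRisk q x y (θ (t + 1))
      ≤ (1 - η * qstar * lammin) * weightedRisk q x y (θ t) := fun t => by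
    rw [hθ t]
    exact (hstep η hη (θ t)).trans (mul_le_mul_of_nonneg_right hrate (weightedRisk_nonneg hq0 _))
  refine ⟨hdescent, tendsto_zero_of_le_mul_of_lt_one (fun t => weightedRisk_nonneg hq0 _) ?_
    hdescent⟩
  linarith [mul_pos (mul_pos hη hqpos) hlampos]

/-- Descent inequality for static GRW with the squared loss.
`F(θ) = Σᵢ qᵢ(⟨θ,xᵢ⟩-yᵢ)²`, `A = Σᵢ‖xᵢ‖²`, `λ_min` the smallest eigenvalue of the
Gram matrix. One GRW step gives `F(θ') ≤ (1-2ηq*λ_min+A²η²)F(θ)`; hence for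
`0 < η ≤ q*λ_min/A²` we get `F(θ^{(t+1)}) ≤ (1-ηq*λ_min)F(θ^{(t)})` and `F(θ^{(t)}) → 0`. -/
theorem stmt_3 {d n : ℕ} (hn : 0 < n)
    (x : Fin n → EuclideanSpace ℝ (Fin d)) (y : Fin n → ℝ)
    (hli : LinearIndependent ℝ x)
    (q : Fin n → ℝ) (hq0 : ∀ i, 0 ≤ q i) (hq1 : ∑ i, q i = 1)
    (qstar : ℝ) (hqstar : qstar = ⨅ i, q i) (hqpos : 0 < qstar)
    (hG : (Matrix.of fun i j => ⟪x i, x j⟫ : Matrix (Fin n) (Fin n) ℝ).IsHermitian)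
    (lammin : ℝ) (hlam : lammin = ⨅ i, hG.eigenvalues i) (hlampos : 0 < lammin)
    (A : ℝ) (hA : A = ∑ i, ‖x i‖ ^ 2) :
    (∀ η : ℝ, 0 < η → ∀ θ : EuclideanSpace ℝ (Fin d),
      (∑ i, q i * (⟪θ - η • ∑ j, (q j * (⟪θ, x j⟫ - y j)) • x j, x i⟫ - y i) ^ 2)
        ≤ (1 - 2 * η * qstar * lammin + A ^ 2 * η ^ 2) * ∑ i, q i * (⟪θ, x i⟫ - y i) ^ 2) ∧
    (∀ η : ℝ, 0 < η → η ≤ qstar * lammin / A ^ 2 →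
      ∀ θ : ℕ → EuclideanSpace ℝ (Fin d),
        (∀ t, θ (t + 1) = θ t - η • ∑ i, (q i * (⟪θ t, x i⟫ - y i)) • x i) →
        (∀ t, (∑ i, q i * (⟪θ (t + 1), x i⟫ - y i) ^ 2)
            ≤ (1 - η * qstar * lammin) * ∑ i, q i * (⟪θ t, x i⟫ - y i) ^ 2) ∧
          Tendsto (fun t => ∑ i, q i * (⟪θ t, x i⟫ - y i) ^ 2) atTop (nhds 0)) :=
  stmt_3_general x y q hq0 hq1 qstar hqstar hqpos hG lammin hlam hlampos A hA
end

section
/- Suppose x₁,…,xₙ are linearly independent and the GRW weights satisfy Assumption 3. If the empirical risk satisfies R̂(θ^{(t)}) → 0 as t → ∞ and θ^{(t)} / ‖θ^{(t)}‖₂ → u for some unit vector u, then u is the max-margin classifier: for every unit vector θ ∈ ℝ^d, minᵢ yᵢ⟨θ,xᵢ⟩ ≤ minᵢ yᵢ⟨u,xᵢ⟩. -/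
/-!
Unrolling the iteration gives `θ_t - θ_0 = η ∑ᵢ yᵢ Sₜ(i) xᵢ`, where `Sₜ(i)` is the cumulative
weight `∑_{s<t} qₛ(i) / (1 + exp (yᵢ⟪θₛ, xᵢ⟫))`. Vanishing risk forces every margin, hence
`‖θ_t‖`, to infinity, so by linear independence the normalized coefficients converge:
`u = ∑ᵢ λᵢ yᵢ xᵢ` with `λᵢ ≥ 0`. If `xᵢ` has a strictly larger `u`-margin than some `xⱼ`, the
margin gap along `θ_t` grows linearly, so the weight of `i` becomes negligible against that of
`j` (Assumption 3 keeps `qₜ(j)` bounded below) and `λᵢ = 0`. These are the KKT conditions of the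
hard-margin SVM: for a unit `v`, `(minᵢ yᵢ⟪v, xᵢ⟫) ∑ λ ≤ ⟪v, u⟫ ≤ 1 = (minᵢ yᵢ⟪u, xᵢ⟫) ∑ λ`.
-/

open scoped RealInnerProductSpace
open Filter Topology

theorem tendsto_atTop_of_tendsto_log_one_add_exp_neg {α : Type*} {l : Filter α} {a : α → ℝ}
    (h : Tendsto (fun s => Real.log (1 + Real.exp (-a s))) l (𝓝 0)) : Tendsto a l atTop := by
  refine tendsto_atTop.2 fun M => ?_
  have hpos : 0 < Real.log (1 + Real.exp (-M)) :=
    Real.log_pos (lt_add_of_pos_right 1 (Real.exp_pos _))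
  filter_upwards [h.eventually (gt_mem_nhds hpos)] with s hs
  by_contra! hlt
  refine hs.not_ge (Real.log_le_log (by positivity) ?_)
  gcongr

theorem tendsto_atTop_of_tendsto_mul_sum_log_one_add_exp_neg {α ι : Type*} [Fintype ι]
    {l : Filter α} {a : α → ι → ℝ} {c : ℝ} (hc : 0 < c)
    (h : Tendsto (fun s => c * ∑ i, Real.log (1 + Real.exp (-a s i))) l (𝓝 0)) (i : ι) :
    Tendsto (fun s => a s i) l atTop := by
  have hnonneg : ∀ s j, 0 ≤ Real.log (1 + Real.exp (-a s j)) := fun s j =>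
    Real.log_nonneg (le_add_of_nonneg_right (Real.exp_pos _).le)
  have hsum : Tendsto (fun s => ∑ j, Real.log (1 + Real.exp (-a s j))) l (𝓝 0) := by
    simpa [inv_mul_cancel_left₀ hc.ne'] using h.const_mul c⁻¹
  refine tendsto_atTop_of_tendsto_log_one_add_exp_neg
    (squeeze_zero (fun s => hnonneg s i) (fun s => ?_) hsum)
  exact Finset.single_le_sum (fun j _ => hnonneg s j) (Finset.mem_univ i)

section InnerProductSpace

variable {α E : Type*} [NormedAddCommGroup E] [InnerProductSpace ℝ E] {l : Filter α}

theorem tendsto_norm_atTop_of_tendsto_inner_atTop [l.NeBot] {θ : α → E} {w : E}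
    (h : Tendsto (fun s => ⟪θ s, w⟫) l atTop) : Tendsto (fun s => ‖θ s‖) l atTop := by
  have hw : 0 < ‖w‖ := by
    refine norm_pos_iff.2 fun hw => not_tendsto_const_atTop (0 : ℝ) l ?_
    simpa [hw] using h
  have hmul : Tendsto (fun s => ‖θ s‖ * ‖w‖) l atTop :=
    tendsto_atTop_mono (fun s => real_inner_le_norm _ _) h
  simpa [mul_div_cancel_right₀ _ hw.ne'] using hmul.atTop_div_const hw

theorem tendsto_inner_atTop_of_inner_pos {θ : α → E} {u w : E}
    (hnorm : Tendsto (fun s => ‖θ s‖) l atTop)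
    (hdir : Tendsto (fun s => ‖θ s‖⁻¹ • θ s) l (𝓝 u)) (hw : 0 < ⟪u, w⟫) :
    Tendsto (fun s => ⟪θ s, w⟫) l atTop := by
  refine (hnorm.atTop_mul_pos hw (hdir.inner tendsto_const_nhds)).congr' ?_
  filter_upwards [hnorm.eventually_gt_atTop 0] with s hs
  rw [real_inner_smul_left, mul_inv_cancel_left₀ hs.ne']

theorem iInf_mul_inner_le_of_eq_sum_smul {ι : Type*} [Fintype ι] [Nonempty ι]
    {x : ι → E} {y lam : ι → ℝ} {u v : E} (hu : ‖u‖ = 1) (hv : ‖v‖ ≤ 1)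
    (hlam : ∀ i, 0 ≤ lam i) (hux : u = ∑ i, (lam i * y i) • x i)
    (hslack : ∀ i, ⨅ j, y j * ⟪u, x j⟫ < y i * ⟪u, x i⟫ → lam i = 0) :
    (⨅ i, y i * ⟪v, x i⟫) ≤ ⨅ i, y i * ⟪u, x i⟫ := by
  set m := ⨅ i, y i * ⟪u, x i⟫
  have hinner : ∀ w : E, ⟪w, u⟫ = ∑ i, lam i * (y i * ⟪w, x i⟫) := fun w => by
    rw [hux, inner_sum]
    exact Finset.sum_congr rfl fun i _ => by rw [real_inner_smul_right, mul_assoc]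
  have hone : 1 = m * ∑ i, lam i := by
    have huu : ⟪u, u⟫ = 1 := by rw [real_inner_self_eq_norm_sq, hu, one_pow]
    rw [← huu, hinner, Finset.mul_sum]
    refine Finset.sum_congr rfl fun i _ => ?_
    rcases (ciInf_le (Finite.bddBelow_range _) i : m ≤ _).eq_or_lt with h | h
    · rw [← h, mul_comm]
    · rw [hslack i h, zero_mul, mul_zero]
  have hsum : 0 < ∑ i, lam i := by
    refine (Finset.sum_nonneg fun i _ => hlam i).lt_of_ne fun h => ?_
    rw [← h, mul_zero] at hone
    exact one_ne_zero hone
  refine le_of_mul_le_mul_right ?_ hsum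
  calc (⨅ i, y i * ⟪v, x i⟫) * ∑ i, lam i
      ≤ ∑ i, lam i * (y i * ⟪v, x i⟫) := by
        rw [mul_comm, Finset.sum_mul]
        exact Finset.sum_le_sum fun i _ =>
          mul_le_mul_of_nonneg_left (ciInf_le (Finite.bddBelow_range _) i) (hlam i)
    _ = ⟪v, u⟫ := (hinner v).symm
    _ ≤ ‖v‖ * ‖u‖ := real_inner_le_norm v u
    _ ≤ 1 := by rw [hu, mul_one]; exact hv
    _ = m * ∑ i, lam i := hone

end InnerProductSpace

theorem LinearIndependent.exists_tendsto_coeffs {α ι E : Type*} [Fintype ι]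
    [NormedAddCommGroup E] [NormedSpace ℝ E] {l : Filter α} [l.NeBot] {x : ι → E}
    (hx : LinearIndependent ℝ x) {a : α → ι → ℝ} {u : E}
    (h : Tendsto (fun s => ∑ i, a s i • x i) l (𝓝 u)) :
    ∃ c : ι → ℝ, u = ∑ i, c i • x i ∧ ∀ i, Tendsto (fun s => a s i) l (𝓝 (c i)) := by
  set f := Fintype.linearCombination ℝ x
  have hf : IsClosedEmbedding f :=
    LinearMap.isClosedEmbedding_of_injective
      (LinearMap.ker_eq_bot.2 hx.fintypeLinearCombination_injective)
  have hfa : ∀ s, f (a s) = ∑ i, a s i • x i := fun s => Fintype.linearCombination_apply ℝ x _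
  obtain ⟨c, rfl⟩ : u ∈ Set.range f :=
    hf.isClosed_range.mem_of_tendsto h (Eventually.of_forall fun s => ⟨a s, hfa s⟩)
  refine ⟨c, Fintype.linearCombination_apply ℝ x c, tendsto_pi_nhds.1 ?_⟩
  rw [hf.isEmbedding.tendsto_nhds_iff]
  simpa only [Function.comp_def, hfa] using h

theorem nonpos_of_isLittleO_of_tendsto_mul_sum_range {a b r : ℕ → ℝ} {A B : ℝ}
    (hab : a =o[atTop] b) (hb : ∀ t, 0 ≤ b t) (hr0 : ∀ t, 0 ≤ r t)
    (hr : Tendsto r atTop (𝓝 0))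
    (hA : Tendsto (fun t => r t * ∑ s ∈ Finset.range t, a s) atTop (𝓝 A))
    (hB : Tendsto (fun t => r t * ∑ s ∈ Finset.range t, b s) atTop (𝓝 B)) : A ≤ 0 := by
  have hle : ∀ ε > 0, A ≤ ε * B := by
    intro ε hε
    obtain ⟨T, hT⟩ := eventually_atTop.1 (hab.bound hε)
    have hrhs : Tendsto (fun t => r t * ∑ s ∈ Finset.range T, a s
        + ε * (r t * ∑ s ∈ Finset.range t, b s)) atTop (𝓝 (ε * B)) := by
      simpa using (hr.mul_const _).add (hB.const_mul ε)
    refine le_of_tendsto_of_tendsto hA hrhs ?_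
    filter_upwards [eventually_ge_atTop T] with t ht
    have htail : ∑ s ∈ Finset.Ico T t, a s ≤ ε * ∑ s ∈ Finset.range t, b s := by
      rw [Finset.mul_sum]
      calc ∑ s ∈ Finset.Ico T t, a s ≤ ∑ s ∈ Finset.Ico T t, ε * b s :=
            Finset.sum_le_sum fun s hs => by
              have := hT s (Finset.mem_Ico.1 hs).1
              rw [Real.norm_of_nonneg (hb s)] at this
              exact (le_abs_self _).trans this
        _ ≤ ∑ s ∈ Finset.range t, ε * b s :=
            Finset.sum_le_sum_of_subset_of_nonneg
              (fun s hs => Finset.mem_range.2 (Finset.mem_Ico.1 hs).2)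
              fun s _ _ => mul_nonneg hε.le (hb s)
    rw [← Finset.sum_range_add_sum_Ico a ht, mul_add, mul_left_comm]
    gcongr
    exact hr0 t
  refine ge_of_tendsto (x := 𝓝[>] (0 : ℝ)) ?_ (eventually_nhdsWithin_of_forall hle)
  have hε : Tendsto (fun ε : ℝ => ε * B) (𝓝[>] 0) (𝓝 (0 * B)) :=
    (tendsto_nhdsWithin_of_tendsto_nhds tendsto_id).mul_const B
  rwa [zero_mul] at hε

theorem div_one_add_exp_le_exp_neg {q : ℝ} (hq : |q| ≤ 1) (z : ℝ) :
    |q / (1 + Real.exp z)| ≤ Real.exp (-z) := by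
  rw [abs_div, abs_of_pos (by positivity : 0 < 1 + Real.exp z), Real.exp_neg,
    div_le_iff₀ (by positivity)]
  calc |q| ≤ 1 := hq
    _ ≤ (Real.exp z)⁻¹ * (1 + Real.exp z) := by
      rw [mul_add, inv_mul_cancel₀ (Real.exp_pos z).ne', mul_one]
      linarith [inv_pos.2 (Real.exp_pos z)]

theorem exp_neg_le_div_one_add_exp {q κ z : ℝ} (hκ : 0 < κ) (hq : κ ≤ q) (hz : 0 ≤ z) :
    Real.exp (-z) ≤ 2 / κ * (q / (1 + Real.exp z)) := by
  have hexp : 1 ≤ Real.exp z := Real.one_le_exp hz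
  rw [Real.exp_neg]
  field_simp
  nlinarith

theorem isLittleO_div_one_add_exp {α : Type*} {l : Filter α} {f g p q : α → ℝ} {κ : ℝ}
    (hκ : 0 < κ) (hp : ∀ s, |p s| ≤ 1) (hq : ∀ᶠ s in l, κ ≤ q s) (hg : ∀ᶠ s in l, 0 ≤ g s)
    (hfg : Tendsto (fun s => f s - g s) l atTop) :
    (fun s => p s / (1 + Real.exp (f s))) =o[l] fun s => q s / (1 + Real.exp (g s)) := by
  have hp_exp : (fun s => p s / (1 + Real.exp (f s))) =O[l] fun s => Real.exp (-f s) :=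
    .of_bound 1 <| Eventually.of_forall fun s => by
      rw [Real.norm_eq_abs, Real.norm_of_nonneg (Real.exp_pos _).le, one_mul]
      exact div_one_add_exp_le_exp_neg (hp s) (f s)
  have hexp : (fun s => Real.exp (-f s)) =o[l] fun s => Real.exp (-g s) :=
    Real.isLittleO_exp_comp_exp_comp.2 (by simpa [sub_eq_add_neg, add_comm] using hfg)
  have hexp_q : (fun s => Real.exp (-g s)) =O[l] fun s => q s / (1 + Real.exp (g s)) := by
    refine .of_bound (2 / κ) ?_
    filter_upwards [hq, hg] with s hqs hgs
    rw [Real.norm_of_nonneg (Real.exp_pos _).le, Real.norm_of_nonneg (by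
      have := hκ.trans_le hqs; positivity)]
    exact exp_neg_le_div_one_add_exp hκ hqs hgs
  exact (hp_exp.trans_isLittleO hexp).trans_isBigO hexp_q

section GRW

variable {ι E : Type*} [NormedAddCommGroup E] [InnerProductSpace ℝ E]
  {x : ι → E} {y : ι → ℝ} {q : ℕ → ι → ℝ} {θ : ℕ → E} {η : ℝ}

variable (x y q θ) in
noncomputable def grwWeight (t : ℕ) (i : ι) : ℝ :=
  q t i / (1 + Real.exp (y i * ⟪θ t, x i⟫))

theorem grwWeight_nonneg (hq0 : ∀ t i, 0 ≤ q t i) (t : ℕ) (i : ι) :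
    0 ≤ grwWeight x y q θ t i :=
  div_nonneg (hq0 t i) (by positivity)

variable [Fintype ι]

theorem grw_sub_eq_sum
    (hupd : ∀ t, θ (t + 1) = θ t
      + η • ∑ i, (q t i * y i / (1 + Real.exp (y i * ⟪θ t, x i⟫))) • x i) (t : ℕ) :
    θ t - θ 0 = ∑ i, (η * y i * ∑ s ∈ Finset.range t, grwWeight x y q θ s i) • x i := by
  rw [← Finset.sum_range_sub]
  simp_rw [Finset.mul_sum, Finset.sum_smul]
  rw [Finset.sum_comm]
  refine Finset.sum_congr rfl fun s _ => ?_
  rw [hupd s, add_sub_cancel_left, Finset.smul_sum]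
  refine Finset.sum_congr rfl fun i _ => ?_
  rw [smul_smul, grwWeight]
  ring_nf

theorem grw_exists_dual (hli : LinearIndependent ℝ x) (hy : ∀ i, y i = 1 ∨ y i = -1)
    (hq0 : ∀ t i, 0 ≤ q t i) (hη : 0 ≤ η)
    (hupd : ∀ t, θ (t + 1) = θ t
      + η • ∑ i, (q t i * y i / (1 + Real.exp (y i * ⟪θ t, x i⟫))) • x i)
    {u : E} (hnorm : Tendsto (fun t => ‖θ t‖) atTop atTop)
    (hdir : Tendsto (fun t => ‖θ t‖⁻¹ • θ t) atTop (𝓝 u)) :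
    ∃ lam : ι → ℝ, (∀ i, 0 ≤ lam i) ∧ u = ∑ i, (lam i * y i) • x i ∧
      ∀ i, Tendsto (fun t => η * ‖θ t‖⁻¹ * ∑ s ∈ Finset.range t, grwWeight x y q θ s i)
        atTop (𝓝 (lam i)) := by
  have hy2 : ∀ i, y i * y i = 1 := fun i => by rcases hy i with h | h <;> simp [h]
  have hconv : Tendsto (fun t => ‖θ t‖⁻¹ • (θ t - θ 0)) atTop (𝓝 u) := by
    simpa [smul_sub] using hdir.sub (hnorm.inv_tendsto_atTop.smul_const (θ 0))
  simp only [grw_sub_eq_sum hupd, Finset.smul_sum, smul_smul] at hconv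
  obtain ⟨c, huc, hc⟩ := hli.exists_tendsto_coeffs hconv
  have hlam : ∀ i, Tendsto (fun t => η * ‖θ t‖⁻¹ * ∑ s ∈ Finset.range t, grwWeight x y q θ s i)
      atTop (𝓝 (y i * c i)) := fun i => by
    refine ((hc i).const_mul (y i)).congr fun t => ?_
    linear_combination (η * ‖θ t‖⁻¹ * ∑ s ∈ Finset.range t, grwWeight x y q θ s i) * hy2 i
  refine ⟨fun i => y i * c i, fun i => ge_of_tendsto' (hlam i) fun t => ?_, ?_, hlam⟩
  · have := Finset.sum_nonneg fun s (_ : s ∈ Finset.range t) =>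
      grwWeight_nonneg (x := x) (y := y) (θ := θ) hq0 s i
    positivity
  · rw [huc]
    refine Finset.sum_congr rfl fun i _ => ?_
    congr 1
    linear_combination -c i * hy2 i

theorem grw_dual_eq_zero_of_margin_lt {i j : ι} (hq0 : ∀ t i, 0 ≤ q t i)
    (hq1 : ∀ t, ∑ i, q t i = 1)
    (hliminf : 0 < liminf (fun t => q t j) atTop) (hη : 0 ≤ η)
    (hmargin : Tendsto (fun t => y j * ⟪θ t, x j⟫) atTop atTop) {u : E}
    (hnorm : Tendsto (fun t => ‖θ t‖) atTop atTop)
    (hdir : Tendsto (fun t => ‖θ t‖⁻¹ • θ t) atTop (𝓝 u))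
    (hij : y j * ⟪u, x j⟫ < y i * ⟪u, x i⟫) {lam : ι → ℝ} (hlam0 : 0 ≤ lam i)
    (hlam : ∀ k, Tendsto (fun t => η * ‖θ t‖⁻¹ * ∑ s ∈ Finset.range t, grwWeight x y q θ s k)
      atTop (𝓝 (lam k))) :
    lam i = 0 := by
  obtain ⟨κ, hκ, hκq⟩ : ∃ κ > 0, ∀ᶠ t in atTop, κ ≤ q t j :=
    ⟨_, half_pos hliminf, (eventually_lt_of_lt_liminf (half_lt_self hliminf)
      (isBoundedUnder_of ⟨0, fun t => hq0 t j⟩)).mono fun _ => le_of_lt⟩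
  have hq_abs : ∀ t, |q t i| ≤ 1 := fun t => abs_le.2 ⟨by linarith [hq0 t i],
    (Finset.single_le_sum (fun k _ => hq0 t k) (Finset.mem_univ i)).trans (hq1 t).le⟩
  have hgap : Tendsto (fun t => y i * ⟪θ t, x i⟫ - y j * ⟪θ t, x j⟫) atTop atTop := by
    simpa only [inner_sub_right, real_inner_smul_right] using
      tendsto_inner_atTop_of_inner_pos (w := y i • x i - y j • x j) hnorm hdir
        (by simpa only [inner_sub_right, real_inner_smul_right, sub_pos] using hij)
  have hweight : (fun t => grwWeight x y q θ t i) =o[atTop] fun t => grwWeight x y q θ t j :=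
    isLittleO_div_one_add_exp hκ hq_abs hκq (hmargin.eventually_ge_atTop 0) hgap
  refine le_antisymm (nonpos_of_isLittleO_of_tendsto_mul_sum_range hweight
    (grwWeight_nonneg hq0 · j) (fun t => by positivity) ?_ (hlam i) (hlam j)) hlam0
  simpa using hnorm.inv_tendsto_atTop.const_mul η

end GRW

theorem stmt_5_general {d n : ℕ} (hn : 0 < n)
    (x : Fin n → EuclideanSpace ℝ (Fin d))
    (y : Fin n → ℝ) (hy : ∀ i, y i = 1 ∨ y i = -1)
    (hli : LinearIndependent ℝ x)
    (q : ℕ → Fin n → ℝ)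
    (hq0 : ∀ t i, 0 ≤ q t i)
    (hq1 : ∀ t, ∑ i, q t i = 1)
    (hliminf : ∀ i, 0 < Filter.liminf (fun t => q t i) atTop)
    (η : ℝ) (hη : 0 < η)
    (θ : ℕ → EuclideanSpace ℝ (Fin d))
    (hupd : ∀ t, θ (t + 1) = θ t
      + η • ∑ i, (q t i * y i / (1 + Real.exp (y i * ⟪θ t, x i⟫))) • x i)
    (hrisk : Tendsto
      (fun t => (1 / (n : ℝ)) * ∑ i, Real.log (1 + Real.exp (-(⟪θ t, x i⟫ * y i))))
      atTop (nhds 0))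
    (u : EuclideanSpace ℝ (Fin d)) (hu : ‖u‖ = 1)
    (hdir : Tendsto (fun t => ‖θ t‖⁻¹ • θ t) atTop (nhds u)) :
    ∀ v : EuclideanSpace ℝ (Fin d), ‖v‖ = 1 →
      (⨅ i, y i * ⟪v, x i⟫) ≤ ⨅ i, y i * ⟪u, x i⟫ := by
  intro v hv
  let i₀ : Fin n := ⟨0, hn⟩
  have hmargin : ∀ i, Tendsto (fun t => y i * ⟪θ t, x i⟫) atTop atTop := fun i => by
    simpa only [mul_comm] using
      tendsto_atTop_of_tendsto_mul_sum_log_one_add_exp_neg (by positivity) hrisk i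
  have hnorm : Tendsto (fun t => ‖θ t‖) atTop atTop :=
    tendsto_norm_atTop_of_tendsto_inner_atTop (w := y i₀ • x i₀)
      (by simpa only [real_inner_smul_right] using hmargin i₀)
  obtain ⟨lam, hlam0, hux, hlam⟩ := grw_exists_dual hli hy hq0 hη.le hupd hnorm hdir
  have : Nonempty (Fin n) := ⟨i₀⟩
  refine iInf_mul_inner_le_of_eq_sum_smul hu hv.le hlam0 hux fun i hi => ?_
  obtain ⟨j, hj⟩ := exists_eq_ciInf_of_finite (f := fun j => y j * ⟪u, x j⟫)
  exact grw_dual_eq_zero_of_margin_lt hq0 hq1 (hliminf j) hη.le (hmargin j) hnorm hdir (hj ▸ hi)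
    (hlam0 i) hlam

/-- For linearly independent data and GRW weights with positive
liminf (Assumption 3), if the logistic empirical risk tends to `0` and the
normalized iterates `θ^{(t)}/‖θ^{(t)}‖` converge to a unit vector `u`, then `u`
is the max-margin classifier. -/
theorem stmt_5 {d n : ℕ} (hn : 0 < n)
    (x : Fin n → EuclideanSpace ℝ (Fin d)) (hx : ∀ i, ‖x i‖ ≤ 1)
    (y : Fin n → ℝ) (hy : ∀ i, y i = 1 ∨ y i = -1)
    (hli : LinearIndependent ℝ x)
    (q : ℕ → Fin n → ℝ)
    (hq0 : ∀ t i, 0 ≤ q t i)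
    (hq1 : ∀ t, ∑ i, q t i = 1)
    (hliminf : ∀ i, 0 < Filter.liminf (fun t => q t i) atTop)
    (η : ℝ) (hη : 0 < η)
    (θ : ℕ → EuclideanSpace ℝ (Fin d))
    (hupd : ∀ t, θ (t + 1) = θ t
      + η • ∑ i, (q t i * y i / (1 + Real.exp (y i * ⟪θ t, x i⟫))) • x i)
    (hrisk : Tendsto
      (fun t => (1 / (n : ℝ)) * ∑ i, Real.log (1 + Real.exp (-(⟪θ t, x i⟫ * y i))))
      atTop (nhds 0))
    (u : EuclideanSpace ℝ (Fin d)) (hu : ‖u‖ = 1)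
    (hdir : Tendsto (fun t => ‖θ t‖⁻¹ • θ t) atTop (nhds u)) :
    ∀ v : EuclideanSpace ℝ (Fin d), ‖v‖ = 1 →
      (⨅ i, y i * ⟪v, x i⟫) ≤ ⨅ i, y i * ⟪u, x i⟫ :=
  stmt_5_general hn x y hy hli q hq0 hq1 hliminf η hη θ hupd hrisk u hu hdir
end

section
/- Suppose x₁,…,xₙ are linearly independent and the GRW weights satisfy Assumption 1, with limiting weights q₁,…,qₙ and F(θ) = Σᵢ qᵢ φ(yᵢ⟨θ,xᵢ⟩). Then there exists η₀ > 0 such that for every learning rate 0 < η ≤ η₀, F(θ^{(t)}) → 0 as t → ∞. -/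
/-!
Write `aᵢ = yᵢ xᵢ`; by linear independence there is `u` with `⟪u, aᵢ⟫ = 1` for all `i`, so
adding `c • u` raises every margin by `c`. A GRW step is a gradient step on the convex,
`L`-smooth loss `Gₜ = ∑ᵢ qₜᵢ φ(⟪·, aᵢ⟫)`, hence for `η L ≤ 1` it does not increase `Gₜ` and
`‖θₜ₊₁ - z‖² ≤ ‖θₜ - z‖² - 2η (Gₜ(θₜ₊₁) - Gₜ(z))` for every anchor `z`. Once the weights are
within a relative `δ` of their limits, `Gₜ` is within a factor `1 ± δ` of `F`. Choose `s` with
`φ(s)` small and anchors whose margins are all at least `s`: then the distance to the anchor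
drops by `2ηφ(s)` at each step where `F > A ≈ 2φ(s)`. So `F` comes back below `A`; from such a
time `τ` the anchor `θ_τ + s u` is at distance `s‖u‖`, which bounds every later excursion above
`A` by a number `K` of steps independent of `δ`, during which `F` grows at most by the factor
`((1 + δ) / (1 - δ))^K ≤ 2`.
-/

open scoped RealInnerProductSpace NNReal Topology
open Filter Set

lemma ConvexOn.add_mul_sub_le_of_hasDerivAt {f : ℝ → ℝ} {f' a : ℝ}
    (hf : ConvexOn ℝ univ f) (ha : HasDerivAt f f' a) (b : ℝ) :
    f a + f' * (b - a) ≤ f b := by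
  rcases lt_trichotomy a b with hab | rfl | hab
  · have := hf.le_slope_of_hasDerivAt (mem_univ a) (mem_univ b) hab ha
    rw [slope_def_field, le_div_iff₀ (sub_pos.2 hab)] at this
    linarith
  · simp
  · have := hf.slope_le_of_hasDerivAt (mem_univ b) (mem_univ a) hab ha
    rw [slope_def_field, div_le_iff₀ (sub_pos.2 hab)] at this
    linarith

lemma le_add_mul_sub_add_sq_of_lipschitzWith {φ φ' : ℝ → ℝ} {L : ℝ≥0}
    (hφ : ∀ t, HasDerivAt φ (φ' t) t) (hφ' : LipschitzWith L φ') (a b : ℝ) :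
    φ b ≤ φ a + φ' a * (b - a) + L / 2 * (b - a) ^ 2 := by
  -- `L t² / 2 - φ t` has the monotone derivative `L t - φ' t`, so it is convex.
  have hψ : ∀ t, HasDerivAt (fun t => L / 2 * t ^ 2 - φ t) (L * t - φ' t) t := fun t => by
    refine (((hasDerivAt_pow 2 t).const_mul ((L : ℝ) / 2)).fun_sub (hφ t)).congr_deriv ?_
    norm_num
    ring
  have hmono : Monotone fun t => L * t - φ' t := fun s t hst => by
    have := (le_abs_self _).trans (hφ'.dist_le_mul t s)
    rw [Real.dist_eq, abs_of_nonneg (sub_nonneg.2 hst)] at this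
    dsimp only
    linarith
  have hconv : ConvexOn ℝ univ fun t => L / 2 * t ^ 2 - φ t := by
    refine Monotone.convexOn_univ_of_deriv (fun t => (hψ t).differentiableAt) ?_
    rwa [funext fun t => (hψ t).deriv]
  have := hconv.add_mul_sub_le_of_hasDerivAt (hψ a) b
  linarith

lemma LinearIndependent.exists_inner_eq_one {ι E : Type*} [NormedAddCommGroup E]
    [InnerProductSpace ℝ E] [FiniteDimensional ℝ E] {a : ι → E} (ha : LinearIndependent ℝ a) :
    ∃ u : E, ∀ i, ⟪u, a i⟫ = 1 := by
  obtain ⟨f, hf⟩ := Module.exists_dual_forall_apply_eq_one (ha.linearIndepOn univ)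
  refine ⟨(InnerProductSpace.toDual ℝ E).symm (LinearMap.toContinuousLinearMap f), fun i => ?_⟩
  rw [InnerProductSpace.toDual_symm_apply]
  exact hf i (mem_univ i)

lemma nat_mul_le_of_forall_le_sub {D : ℕ → ℝ} {c : ℝ} {b k : ℕ} (hD : 0 ≤ D (b + k))
    (h : ∀ j < k, D (b + j + 1) ≤ D (b + j) - c) : k * c ≤ D b := by
  have key : ∀ m ≤ k, D (b + m) ≤ D b - m * c := by
    intro m hm
    induction m with
    | zero => simp
    | succ m ih =>
      have := h m hm
      rw [← add_assoc]
      push_cast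
      linarith [ih (by omega)]
  linarith [key k le_rfl]

lemma le_pow_mul_of_excursions_le {f : ℕ → ℝ} {A ρ : ℝ} {K T τ t : ℕ} (hA : 0 ≤ A)
    (hρ : 1 ≤ ρ) (hgrow : ∀ t ≥ T, f (t + 1) ≤ ρ * f t) (hτ : T ≤ τ) (hfτ : f τ ≤ A)
    (hexc : ∀ b ≥ T, f b ≤ A → ∀ k, (∀ j < k, A < f (b + j + 1)) → k ≤ K) (ht : τ ≤ t) :
    f t ≤ ρ ^ K * A := by
  classical
  let good : ℕ → Prop := fun m => τ ≤ m ∧ f m ≤ A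
  set b := Nat.findGreatest good t
  obtain ⟨hτb, hbA⟩ : good b := Nat.findGreatest_spec ht ⟨le_rfl, hfτ⟩
  have hbt : b ≤ t := Nat.findGreatest_le t
  have hk : t - b ≤ K := hexc b (hτ.trans hτb) hbA (t - b) fun j hj => by
    have := Nat.findGreatest_is_greatest (P := good) (n := t)
      (k := b + j + 1) (by omega) (by omega)
    exact lt_of_not_ge fun h => this ⟨by omega, h⟩
  rw [← Nat.add_sub_cancel' hbt]
  calc f (b + (t - b)) ≤ ρ ^ (t - b) * f b :=
        le_geom (u := fun j => f (b + j)) (by linarith) _ fun j _ => hgrow (b + j) (by omega)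
    _ ≤ ρ ^ K * A := (mul_le_mul_of_nonneg_left hbA (by positivity)).trans
        (mul_le_mul_of_nonneg_right (pow_le_pow_right₀ hρ hk) hA)

lemma exists_div_pow_le_two (K : ℕ) :
    ∃ δ : ℝ, 0 < δ ∧ δ ≤ 1 / 2 ∧ ((1 + δ) / (1 - δ)) ^ K ≤ 2 := by
  have hcont : ContinuousAt (fun δ : ℝ => ((1 + δ) / (1 - δ)) ^ K) 0 := by
    fun_prop (disch := norm_num)
  have hlt : ∀ᶠ δ in 𝓝 (0 : ℝ), ((1 + δ) / (1 - δ)) ^ K < 2 :=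
    hcont.eventually (gt_mem_nhds (by norm_num))
  have hsmall : ∀ᶠ δ in 𝓝 (0 : ℝ), δ < 1 / 2 := gt_mem_nhds (by norm_num)
  obtain ⟨δ, ⟨h2, h1⟩, h0⟩ :=
    (((hlt.and hsmall).filter_mono nhdsWithin_le_nhds).and
      (eventually_mem_nhdsWithin (s := Ioi 0))).exists
  exact ⟨δ, h0, h1.le, h2.le⟩

lemma eventually_forall_abs_sub_le_mul {α ι : Type*} [Finite ι] {l : Filter α}
    {q : α → ι → ℝ} {qlim : ι → ℝ} (hq : ∀ i, Tendsto (fun t => q t i) l (𝓝 (qlim i)))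
    (hqlim : ∀ i, 0 < qlim i) {δ : ℝ} (hδ : 0 < δ) :
    ∀ᶠ t in l, ∀ i, |q t i - qlim i| ≤ δ * qlim i := by
  refine eventually_all.2 fun i => ?_
  filter_upwards [(hq i).eventually (Metric.closedBall_mem_nhds _ (mul_pos hδ (hqlim i)))]
    with t ht
  rwa [Real.dist_eq] at ht

section MarginLoss

variable {ι E : Type*} [Fintype ι] [NormedAddCommGroup E] [InnerProductSpace ℝ E]
  {φ φ' : ℝ → ℝ} {a : ι → E} {w w' : ι → ℝ}

/-- The margin vectors `a i` stand for `yᵢ xᵢ`, so that `⟪v, a i⟫` is the margin `yᵢ ⟪v, xᵢ⟫`. -/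
def marginLoss (φ : ℝ → ℝ) (a : ι → E) (w : ι → ℝ) (v : E) : ℝ :=
  ∑ i, w i * φ ⟪v, a i⟫

def marginLossGrad (φ' : ℝ → ℝ) (a : ι → E) (w : ι → ℝ) (v : E) : E :=
  ∑ i, (w i * φ' ⟪v, a i⟫) • a i

lemma inner_marginLossGrad (v h : E) :
    ⟪marginLossGrad φ' a w v, h⟫ = ∑ i, w i * φ' ⟪v, a i⟫ * ⟪h, a i⟫ := by
  rw [marginLossGrad, sum_inner]
  exact Finset.sum_congr rfl fun i _ => by rw [real_inner_smul_left, real_inner_comm h]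

lemma marginLoss_nonneg (hw : ∀ i, 0 ≤ w i) (hφ : ∀ t, 0 ≤ φ t) (v : E) :
    0 ≤ marginLoss φ a w v :=
  Finset.sum_nonneg fun i _ => mul_nonneg (hw i) (hφ _)

lemma marginLoss_add_inner_grad_le (hw : ∀ i, 0 ≤ w i) (hconv : ConvexOn ℝ univ φ)
    (hφ : ∀ t, HasDerivAt φ (φ' t) t) (v z : E) :
    marginLoss φ a w v + ⟪marginLossGrad φ' a w v, z - v⟫ ≤ marginLoss φ a w z := by
  rw [inner_marginLossGrad, marginLoss, marginLoss, ← Finset.sum_add_distrib]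
  refine Finset.sum_le_sum fun i _ => ?_
  have := hconv.add_mul_sub_le_of_hasDerivAt (hφ ⟪v, a i⟫) ⟪z, a i⟫
  rw [inner_sub_left]
  linarith [mul_le_mul_of_nonneg_left this (hw i)]

lemma marginLoss_sub_smul_grad_le {L : ℝ≥0} (hw : ∀ i, 0 ≤ w i) (hw1 : ∑ i, w i = 1)
    (ha : ∀ i, ‖a i‖ ≤ 1) (hφ : ∀ t, HasDerivAt φ (φ' t) t) (hφ' : LipschitzWith L φ')
    (η : ℝ) (v : E) :
    marginLoss φ a w (v - η • marginLossGrad φ' a w v) ≤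
      marginLoss φ a w v - η * (1 - L * η / 2) * ‖marginLossGrad φ' a w v‖ ^ 2 := by
  set g := marginLossGrad φ' a w v
  have hterm : ∀ i, w i * φ ⟪v - η • g, a i⟫ ≤ w i * φ ⟪v, a i⟫
      - η * (w i * φ' ⟪v, a i⟫ * ⟪g, a i⟫) + L / 2 * η ^ 2 * ‖g‖ ^ 2 * w i := fun i => by
    have hsmooth := le_add_mul_sub_add_sq_of_lipschitzWith hφ hφ' ⟪v, a i⟫ ⟪v - η • g, a i⟫
    have hga : |⟪g, a i⟫| ≤ ‖g‖ :=
      (abs_real_inner_le_norm g (a i)).trans (mul_le_of_le_one_right (norm_nonneg g) (ha i))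
    have hsq : ⟪g, a i⟫ ^ 2 ≤ ‖g‖ ^ 2 := sq_le_sq.2 (by rwa [abs_norm])
    rw [inner_sub_left, real_inner_smul_left] at hsmooth ⊢
    have hquad := mul_le_mul_of_nonneg_left hsq (by positivity : (0 : ℝ) ≤ L / 2 * η ^ 2)
    linarith [mul_le_mul_of_nonneg_left hsmooth (hw i), mul_le_mul_of_nonneg_left hquad (hw i)]
  calc marginLoss φ a w (v - η • g)
      ≤ ∑ i, (w i * φ ⟪v, a i⟫ - η * (w i * φ' ⟪v, a i⟫ * ⟪g, a i⟫)
          + L / 2 * η ^ 2 * ‖g‖ ^ 2 * w i) := Finset.sum_le_sum fun i _ => hterm i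
    _ = marginLoss φ a w v - η * ⟪g, g⟫ + L / 2 * η ^ 2 * ‖g‖ ^ 2 * ∑ i, w i := by
      rw [Finset.sum_add_distrib, Finset.sum_sub_distrib, ← Finset.mul_sum, ← Finset.mul_sum,
        ← inner_marginLossGrad]
      rfl
    _ = marginLoss φ a w v - η * (1 - L * η / 2) * ‖g‖ ^ 2 := by
      rw [hw1, real_inner_self_eq_norm_sq]
      ring

lemma sq_norm_sub_smul_grad_sub_le {L : ℝ≥0} (hw : ∀ i, 0 ≤ w i) (hw1 : ∑ i, w i = 1)
    (ha : ∀ i, ‖a i‖ ≤ 1) (hconv : ConvexOn ℝ univ φ) (hφ : ∀ t, HasDerivAt φ (φ' t) t)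
    (hφ' : LipschitzWith L φ') {η : ℝ} (hη : 0 ≤ η) (hηL : η * L ≤ 1) (v z : E) :
    ‖v - η • marginLossGrad φ' a w v - z‖ ^ 2 ≤ ‖v - z‖ ^ 2
      - 2 * η * (marginLoss φ a w (v - η • marginLossGrad φ' a w v) - marginLoss φ a w z) := by
  set g := marginLossGrad φ' a w v
  have hexpand : ‖v - η • g - z‖ ^ 2 = ‖v - z‖ ^ 2 - 2 * η * ⟪g, v - z⟫ + η ^ 2 * ‖g‖ ^ 2 := by
    rw [show v - η • g - z = (v - z) - η • g by abel, norm_sub_sq_real, real_inner_smul_right,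
      norm_smul, mul_pow, Real.norm_eq_abs, sq_abs, real_inner_comm]
    ring
  have hconvex := marginLoss_add_inner_grad_le (a := a) hw hconv hφ v z
  have hdescent := marginLoss_sub_smul_grad_le hw hw1 ha hφ hφ' η v
  rw [inner_sub_right] at hexpand hconvex
  nlinarith [sq_nonneg ‖g‖, mul_nonneg (mul_nonneg hη hη) (sq_nonneg ‖g‖)]

lemma marginLoss_le_of_le_inner (hw : ∀ i, 0 ≤ w i) (hw1 : ∑ i, w i = 1) (hφ : Antitone φ)
    {s : ℝ} {z : E} (hz : ∀ i, s ≤ ⟪z, a i⟫) : marginLoss φ a w z ≤ φ s :=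
  calc marginLoss φ a w z ≤ ∑ i, w i * φ s :=
        Finset.sum_le_sum fun i _ => mul_le_mul_of_nonneg_left (hφ (hz i)) (hw i)
    _ = φ s := by rw [← Finset.sum_mul, hw1, one_mul]

lemma marginLoss_le_one_add_mul (hφ : ∀ t, 0 ≤ φ t) {δ : ℝ}
    (hww' : ∀ i, |w i - w' i| ≤ δ * w' i) (v : E) :
    marginLoss φ a w v ≤ (1 + δ) * marginLoss φ a w' v := by
  rw [marginLoss, marginLoss, Finset.mul_sum]
  refine Finset.sum_le_sum fun i _ => ?_
  rw [← mul_assoc]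
  exact mul_le_mul_of_nonneg_right (by linarith [(abs_le.1 (hww' i)).2]) (hφ _)

lemma one_sub_mul_marginLoss_le (hφ : ∀ t, 0 ≤ φ t) {δ : ℝ}
    (hww' : ∀ i, |w i - w' i| ≤ δ * w' i) (v : E) :
    (1 - δ) * marginLoss φ a w' v ≤ marginLoss φ a w v := by
  rw [marginLoss, marginLoss, Finset.mul_sum]
  refine Finset.sum_le_sum fun i _ => ?_
  rw [← mul_assoc]
  exact mul_le_mul_of_nonneg_right (by linarith [(abs_le.1 (hww' i)).1]) (hφ _)

lemma marginLoss_sub_smul_grad_le_mul {L : ℝ≥0} (hw : ∀ i, 0 ≤ w i) (hw1 : ∑ i, w i = 1)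
    (ha : ∀ i, ‖a i‖ ≤ 1) (hφ0 : ∀ t, 0 ≤ φ t) (hφ : ∀ t, HasDerivAt φ (φ' t) t)
    (hφ' : LipschitzWith L φ') {δ η : ℝ} (hww' : ∀ i, |w i - w' i| ≤ δ * w' i) (hδ : δ < 1)
    (hη : 0 ≤ η) (hηL : η * L ≤ 2) (v : E) :
    marginLoss φ a w' (v - η • marginLossGrad φ' a w v) ≤
      (1 + δ) / (1 - δ) * marginLoss φ a w' v := by
  have hdescent := marginLoss_sub_smul_grad_le hw hw1 ha hφ hφ' η v
  have hdecrease : 0 ≤ η * (1 - L * η / 2) * ‖marginLossGrad φ' a w v‖ ^ 2 :=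
    mul_nonneg (mul_nonneg hη (by linarith)) (sq_nonneg _)
  have hlow := one_sub_mul_marginLoss_le (a := a) hφ0 hww' (v - η • marginLossGrad φ' a w v)
  have hupp := marginLoss_le_one_add_mul (a := a) hφ0 hww' v
  rw [div_mul_eq_mul_div, le_div_iff₀ (by linarith)]
  linarith

lemma inner_nonneg_of_marginLoss_le (hw : ∀ i, 0 ≤ w i) (hφ : ∀ t, 0 ≤ φ t)
    (hanti : StrictAnti φ) {v : E} {i : ι} (hwi : 0 < w i)
    (hv : marginLoss φ a w v ≤ w i * φ 0) : 0 ≤ ⟪v, a i⟫ := by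
  by_contra! hneg
  have hterm : w i * φ ⟪v, a i⟫ ≤ marginLoss φ a w v :=
    Finset.single_le_sum (f := fun j => w j * φ ⟪v, a j⟫)
      (fun j _ => mul_nonneg (hw j) (hφ _)) (Finset.mem_univ i)
  linarith [mul_lt_mul_of_pos_left (hanti hneg) hwi]

end MarginLoss

section Potential

variable {ι E : Type*} [NormedAddCommGroup E] [InnerProductSpace ℝ E]
  {a : ι → E} {u : E} {θ : ℕ → E} {f : ℕ → ℝ} {s A c : ℝ} {T : ℕ}

lemma exists_le_of_sq_norm_drop (ha : ∀ i, ‖a i‖ ≤ 1) (hu : ∀ i, ⟪u, a i⟫ = 1) (hc : 0 < c)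
    (hdrop : ∀ t ≥ T, ∀ z : E, (∀ i, s ≤ ⟪z, a i⟫) → A < f (t + 1) →
      ‖θ (t + 1) - z‖ ^ 2 ≤ ‖θ t - z‖ ^ 2 - c) :
    ∃ τ ≥ T, f τ ≤ A := by
  by_contra! hbad
  set z := θ T + (‖θ T‖ + s) • u
  have hz : ∀ i, s ≤ ⟪z, a i⟫ := fun i => by
    have := (abs_real_inner_le_norm (θ T) (a i)).trans
      (mul_le_of_le_one_right (norm_nonneg _) (ha i))
    rw [inner_add_left, real_inner_smul_left, hu]
    linarith [neg_abs_le ⟪θ T, a i⟫]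
  obtain ⟨k, hk⟩ := exists_nat_gt (‖θ T - z‖ ^ 2 / c)
  have := nat_mul_le_of_forall_le_sub (D := fun t => ‖θ t - z‖ ^ 2) (sq_nonneg ‖θ (T + k) - z‖)
    fun j _ => hdrop (T + j) (by omega) z hz (hbad _ (by omega))
  rw [div_lt_iff₀ hc] at hk
  linarith

lemma nat_mul_le_sq_norm_of_sq_norm_drop (hu : ∀ i, ⟪u, a i⟫ = 1)
    (hdrop : ∀ t ≥ T, ∀ z : E, (∀ i, s ≤ ⟪z, a i⟫) → A < f (t + 1) →
      ‖θ (t + 1) - z‖ ^ 2 ≤ ‖θ t - z‖ ^ 2 - c)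
    {b k : ℕ} (hb : T ≤ b) (hθb : ∀ i, 0 ≤ ⟪θ b, a i⟫) (hexc : ∀ j < k, A < f (b + j + 1)) :
    k * c ≤ ‖s • u‖ ^ 2 := by
  have hz : ∀ i, s ≤ ⟪θ b + s • u, a i⟫ := fun i => by
    rw [inner_add_left, real_inner_smul_left, hu]
    linarith [hθb i]
  have := nat_mul_le_of_forall_le_sub (D := fun t => ‖θ t - (θ b + s • u)‖ ^ 2)
    (sq_nonneg ‖θ (b + k) - (θ b + s • u)‖)
    fun j hj => hdrop (b + j) (by omega) _ hz (hexc j hj)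
  simpa using this

lemma eventually_le_pow_mul_of_sq_norm_drop {ρ : ℝ} (ha : ∀ i, ‖a i‖ ≤ 1)
    (hu : ∀ i, ⟪u, a i⟫ = 1) (hc : 0 < c) (hA : 0 ≤ A) (hρ : 1 ≤ ρ)
    (hdrop : ∀ t ≥ T, ∀ z : E, (∀ i, s ≤ ⟪z, a i⟫) → A < f (t + 1) →
      ‖θ (t + 1) - z‖ ^ 2 ≤ ‖θ t - z‖ ^ 2 - c)
    (hgrow : ∀ t ≥ T, f (t + 1) ≤ ρ * f t) (hmargin : ∀ t ≥ T, f t ≤ A → ∀ i, 0 ≤ ⟪θ t, a i⟫) :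
    ∀ᶠ t in atTop, f t ≤ ρ ^ ⌊‖s • u‖ ^ 2 / c⌋₊ * A := by
  obtain ⟨τ, hτ, hτA⟩ := exists_le_of_sq_norm_drop ha hu hc hdrop
  filter_upwards [eventually_ge_atTop τ] with t ht
  refine le_pow_mul_of_excursions_le hA hρ hgrow hτ hτA (fun b hb hbA k hk => ?_) ht
  refine Nat.le_floor ((le_div_iff₀ hc).2 ?_)
  exact nat_mul_le_sq_norm_of_sq_norm_drop hu hdrop hb (hmargin b hb hbA) hk

end Potential

section GRW

variable {ι E : Type*} [Fintype ι] [NormedAddCommGroup E] [InnerProductSpace ℝ E]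
  {φ φ' : ℝ → ℝ} {L : ℝ≥0} {a : ι → E} {u : E} {q : ℕ → ι → ℝ} {qlim : ι → ℝ} {η : ℝ}
  {θ : ℕ → E}

lemma eventually_marginLoss_grw_lt (ha : ∀ i, ‖a i‖ ≤ 1) (hu : ∀ i, ⟪u, a i⟫ = 1)
    (hφpos : ∀ t, 0 < φ t) (hφconv : ConvexOn ℝ univ φ) (hφ : ∀ t, HasDerivAt φ (φ' t) t)
    (hφ' : LipschitzWith L φ') (hφanti : StrictAnti φ) (hφlim : Tendsto φ atTop (𝓝 0))
    (hq0 : ∀ t i, 0 ≤ q t i) (hq1 : ∀ t, ∑ i, q t i = 1)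
    (hqlim : ∀ i, Tendsto (fun t => q t i) atTop (𝓝 (qlim i))) (hqpos : ∀ i, 0 < qlim i)
    (hη : 0 < η) (hηL : η * L ≤ 1)
    (hθ : ∀ t, θ (t + 1) = θ t - η • marginLossGrad φ' a (q t) (θ t)) {ε : ℝ} (hε : 0 < ε) :
    ∀ᶠ t in atTop, marginLoss φ a qlim (θ t) < ε := by
  have hφ0 : ∀ t, 0 ≤ φ t := fun t => (hφpos t).le
  -- The second condition forces nonnegative margins wherever `F ≤ A ≤ 4 φ(s)`.
  obtain ⟨s, hsε, hs0⟩ : ∃ s, 8 * φ s < ε ∧ ∀ i, 4 * φ s ≤ qlim i * φ 0 := by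
    have hsmall : ∀ᶠ s in atTop, φ s < ε / 8 ∧ ∀ i, φ s ≤ qlim i * φ 0 / 4 :=
      (hφlim.eventually (gt_mem_nhds (by positivity))).and <| eventually_all.2 fun i =>
        hφlim.eventually (ge_mem_nhds (div_pos (mul_pos (hqpos i) (hφpos 0)) four_pos))
    obtain ⟨s, h1, h2⟩ := hsmall.exists
    exact ⟨s, by linarith, fun i => by linarith [h2 i]⟩
  set P := φ s
  have hP : 0 < P := hφpos s
  -- Excursions above `A` last at most this many steps whatever `δ` is.
  obtain ⟨δ, hδ0, hδ1, hρ⟩ := exists_div_pow_le_two ⌊‖s • u‖ ^ 2 / (2 * η * P)⌋₊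
  obtain ⟨T, hT⟩ := eventually_atTop.1 (eventually_forall_abs_sub_le_mul hqlim hqpos hδ0)
  set A := 2 * P / (1 - δ)
  have hA : (1 - δ) * A = 2 * P := mul_div_cancel₀ _ (by linarith : 0 < 1 - δ).ne'
  have hA4 : A ≤ 4 * P := by rw [div_le_iff₀ (by linarith)]; nlinarith
  have hdrop : ∀ t ≥ T, ∀ z : E, (∀ i, s ≤ ⟪z, a i⟫) → A < marginLoss φ a qlim (θ (t + 1)) →
      ‖θ (t + 1) - z‖ ^ 2 ≤ ‖θ t - z‖ ^ 2 - 2 * η * P := by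
    intro t ht z hz hAF
    have hstep := sq_norm_sub_smul_grad_sub_le (hq0 t) (hq1 t) ha hφconv hφ hφ' hη.le hηL (θ t) z
    have hlow := one_sub_mul_marginLoss_le (a := a) hφ0 (hT t ht) (θ (t + 1))
    have hGz := marginLoss_le_of_le_inner (hq0 t) (hq1 t) hφanti.antitone hz
    rw [← hθ t] at hstep
    have hgap : P ≤ marginLoss φ a (q t) (θ (t + 1)) - marginLoss φ a (q t) z := by
      linarith [mul_lt_mul_of_pos_left hAF (by linarith : 0 < 1 - δ)]
    linarith [mul_le_mul_of_nonneg_left hgap (by positivity : 0 ≤ 2 * η)]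
  have hgrow : ∀ t ≥ T, marginLoss φ a qlim (θ (t + 1)) ≤
      (1 + δ) / (1 - δ) * marginLoss φ a qlim (θ t) := fun t ht => by
    rw [hθ t]
    exact marginLoss_sub_smul_grad_le_mul (hq0 t) (hq1 t) ha hφ0 hφ hφ' (hT t ht) (by linarith)
      hη.le (by linarith) (θ t)
  have hmargin : ∀ t ≥ T, marginLoss φ a qlim (θ t) ≤ A → ∀ i, 0 ≤ ⟪θ t, a i⟫ :=
    fun t _ htA i =>
      inner_nonneg_of_marginLoss_le (fun i => (hqpos i).le) hφ0 hφanti (hqpos i)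
        (by linarith [hs0 i])
  filter_upwards [eventually_le_pow_mul_of_sq_norm_drop ha hu (by positivity)
    (div_nonneg (by linarith) (by linarith))
    (by rw [le_div_iff₀ (by linarith)]; linarith) hdrop hgrow hmargin] with t ht
  calc marginLoss φ a qlim (θ t) ≤ 2 * (4 * P) :=
      ht.trans (mul_le_mul hρ hA4 (div_nonneg (by linarith) (by linarith)) (by norm_num))
    _ < ε := by linarith

theorem tendsto_marginLoss_grw (ha : ∀ i, ‖a i‖ ≤ 1) (hu : ∀ i, ⟪u, a i⟫ = 1)
    (hφpos : ∀ t, 0 < φ t) (hφconv : ConvexOn ℝ univ φ) (hφ : ∀ t, HasDerivAt φ (φ' t) t)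
    (hφ' : LipschitzWith L φ') (hφanti : StrictAnti φ) (hφlim : Tendsto φ atTop (𝓝 0))
    (hq0 : ∀ t i, 0 ≤ q t i) (hq1 : ∀ t, ∑ i, q t i = 1)
    (hqlim : ∀ i, Tendsto (fun t => q t i) atTop (𝓝 (qlim i))) (hqpos : ∀ i, 0 < qlim i)
    (hη : 0 < η) (hηL : η * L ≤ 1)
    (hθ : ∀ t, θ (t + 1) = θ t - η • marginLossGrad φ' a (q t) (θ t)) :
    Tendsto (fun t => marginLoss φ a qlim (θ t)) atTop (𝓝 0) := by
  refine tendsto_order.2 ⟨fun b hb => Eventually.of_forall fun t => hb.trans_le ?_,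
    fun ε hε => eventually_marginLoss_grw_lt ha hu hφpos hφconv hφ hφ' hφanti hφlim hq0 hq1
      hqlim hqpos hη hηL hθ hε⟩
  exact marginLoss_nonneg (fun i => (hqpos i).le) (fun t => (hφpos t).le) _

end GRW

theorem stmt_7_general {d n : ℕ}
    (x : Fin n → EuclideanSpace ℝ (Fin d)) (hx : ∀ i, ‖x i‖ ≤ 1)
    (y : Fin n → ℝ) (hy : ∀ i, y i = 1 ∨ y i = -1)
    (hli : LinearIndependent ℝ x)
    (φ φ' : ℝ → ℝ) (L : NNReal)
    (hφpos : ∀ t : ℝ, 0 < φ t)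
    (hφconv : ConvexOn ℝ Set.univ φ)
    (hφderiv : ∀ a : ℝ, HasDerivAt φ (φ' a) a)
    (hφlip : LipschitzWith L φ')
    (hφanti : StrictAnti φ)
    (hφlim : Tendsto φ atTop (nhds 0))
    (q : ℕ → Fin n → ℝ)
    (hq0 : ∀ t i, 0 ≤ q t i)
    (hq1 : ∀ t, ∑ i, q t i = 1)
    (qlim : Fin n → ℝ)
    (hqlim : ∀ i, Tendsto (fun t => q t i) atTop (nhds (qlim i)))
    (hqpos : ∀ i, 0 < qlim i) :
    ∃ η₀ > (0 : ℝ), ∀ η : ℝ, 0 < η → η ≤ η₀ →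
      ∀ θ : ℕ → EuclideanSpace ℝ (Fin d),
        (∀ t, θ (t + 1) = θ t - η • ∑ i, (q t i * y i * φ' (y i * ⟪θ t, x i⟫)) • x i) →
        Tendsto (fun t => ∑ i, qlim i * φ (y i * ⟪θ t, x i⟫)) atTop (nhds 0) := by
  have hy0 : ∀ i, y i ≠ 0 := fun i => by rcases hy i with h | h <;> simp [h]
  set a := fun i => y i • x i
  have hmargin : ∀ v i, ⟪v, a i⟫ = y i * ⟪v, x i⟫ := fun v i => real_inner_smul_right _ _ _
  have ha : ∀ i, ‖a i‖ ≤ 1 := fun i => by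
    rcases hy i with h | h <;> simpa [a, h, norm_smul] using hx i
  have hali : LinearIndependent ℝ a := hli.units_smul fun i => Units.mk0 (y i) (hy0 i)
  obtain ⟨u, hu⟩ := hali.exists_inner_eq_one
  refine ⟨((L : ℝ) + 1)⁻¹, by positivity, fun η hη hηle θ hθ => ?_⟩
  have hηL : η * L ≤ 1 := by
    have := mul_le_mul_of_nonneg_right hηle (by positivity : (0 : ℝ) ≤ L + 1)
    rw [inv_mul_cancel₀ (by positivity)] at this
    linarith
  have hθ' : ∀ t, θ (t + 1) = θ t - η • marginLossGrad φ' a (q t) (θ t) := fun t => by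
    simp only [hθ t, marginLossGrad, hmargin, a, smul_smul, mul_right_comm]
  simpa only [marginLoss, hmargin] using tendsto_marginLoss_grw ha hu hφpos hφconv hφderiv
    hφlip hφanti hφlim hq0 hq1 hqlim hqpos hη hηL hθ'

/-- For a positive, convex, `L`-smooth, strictly decreasing loss
`φ` with `φ(t) → 0` at `+∞`, linearly independent data, and GRW weights
satisfying Assumption 1 with limits `q₁,…,qₙ`, there exists `η₀ > 0` such that
for every `0 < η ≤ η₀`, `F(θ^{(t)}) = Σᵢ qᵢ φ(yᵢ⟨θ^{(t)},xᵢ⟩) → 0`. -/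
theorem stmt_7 {d n : ℕ} (hn : 0 < n)
    (x : Fin n → EuclideanSpace ℝ (Fin d)) (hx : ∀ i, ‖x i‖ ≤ 1)
    (y : Fin n → ℝ) (hy : ∀ i, y i = 1 ∨ y i = -1)
    (hli : LinearIndependent ℝ x)
    (φ φ' : ℝ → ℝ) (L : NNReal)
    (hφpos : ∀ t : ℝ, 0 < φ t)
    (hφconv : ConvexOn ℝ Set.univ φ)
    (hφderiv : ∀ a : ℝ, HasDerivAt φ (φ' a) a)
    (hφlip : LipschitzWith L φ')
    (hφanti : StrictAnti φ)
    (hφlim : Tendsto φ atTop (nhds 0))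
    (q : ℕ → Fin n → ℝ)
    (hq0 : ∀ t i, 0 ≤ q t i)
    (hq1 : ∀ t, ∑ i, q t i = 1)
    (qlim : Fin n → ℝ)
    (hqlim : ∀ i, Tendsto (fun t => q t i) atTop (nhds (qlim i)))
    (hqpos : ∀ i, 0 < qlim i) :
    ∃ η₀ > (0 : ℝ), ∀ η : ℝ, 0 < η → η ≤ η₀ →
      ∀ θ : ℕ → EuclideanSpace ℝ (Fin d),
        (∀ t, θ (t + 1) = θ t - η • ∑ i, (q t i * y i * φ' (y i * ⟪θ t, x i⟫)) • x i) →
        Tendsto (fun t => ∑ i, qlim i * φ (y i * ⟪θ t, x i⟫)) atTop (nhds 0) :=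
  stmt_7_general x hx y hy hli φ φ' L hφpos hφconv hφderiv hφlip hφanti hφlim q hq0 hq1 qlim hqlim
    hqpos
end

section
/- Let q₁,…,qₙ > 0 with Σᵢ qᵢ = 1 and F(θ) = Σᵢ qᵢ φ(yᵢ⟨θ,xᵢ⟩). For every R > 0 such that min_{‖θ‖₂ ≤ R} F(θ) < minᵢ qᵢ φ(0), the minimizer of F over the closed ball {θ : ‖θ‖₂ ≤ R} is unique. -/
open scoped RealInnerProductSpace
open Metric Set

/-!
Every minimizer `θ` of `F` on the ball has `F θ < minᵢ qᵢ φ(0)`, and since all terms of `F` are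
positive this forces every margin `yᵢ⟪θ, xᵢ⟫` to be positive. Stretching `θ` then increases every
margin, hence decreases `F`, so a minimizer lies on the boundary sphere. If there were two
distinct minimizers, by convexity of `F` their midpoint would again be a minimizer, but by strict
convexity of the Euclidean ball it lies in the open ball.
-/

section ClosedBall

variable {E : Type*} [NormedAddCommGroup E] [NormedSpace ℝ E]

theorem norm_eq_of_isMinOn_closedBall_of_smul_lt {f : E → ℝ} {R : ℝ} {θ : E}
    (hθ : θ ∈ closedBall (0 : E) R) (hmin : IsMinOn f (closedBall 0 R) θ) (hθ0 : θ ≠ 0)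
    (hscale : ∀ c : ℝ, 1 < c → f (c • θ) < f θ) : ‖θ‖ = R := by
  rw [mem_closedBall_zero_iff] at hθ
  by_contra hne
  have hnorm : 0 < ‖θ‖ := norm_pos_iff.mpr hθ0
  have hc : 1 < R / ‖θ‖ := (one_lt_div hnorm).mpr (hθ.lt_of_ne hne)
  have hcθ : (R / ‖θ‖) • θ ∈ closedBall (0 : E) R := by
    rw [mem_closedBall_zero_iff, norm_smul, Real.norm_of_nonneg (by linarith),
      div_mul_cancel₀ _ hnorm.ne']
  exact (hscale _ hc).not_ge (hmin hcθ)

variable [StrictConvexSpace ℝ E]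

theorem eq_of_isMinOn_closedBall_of_norm_eq {f : E → ℝ} {R : ℝ}
    (hf : ConvexOn ℝ (closedBall 0 R) f)
    (hsphere : ∀ θ ∈ closedBall (0 : E) R, IsMinOn f (closedBall 0 R) θ → ‖θ‖ = R)
    {θ₁ θ₂ : E} (h₁ : θ₁ ∈ closedBall (0 : E) R) (hmin₁ : IsMinOn f (closedBall 0 R) θ₁)
    (h₂ : θ₂ ∈ closedBall (0 : E) R) (hmin₂ : IsMinOn f (closedBall 0 R) θ₂) : θ₁ = θ₂ := by
  by_contra hne
  set m : E := (1 / 2 : ℝ) • (θ₁ + θ₂)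
  have hnorm₁ := hsphere θ₁ h₁ hmin₁
  have hm_lt : ‖m‖ < R := by
    rw [← hnorm₁]
    exact (norm_midpoint_lt_iff (hnorm₁.trans (hsphere θ₂ h₂ hmin₂).symm)).mpr hne
  have hm : m ∈ closedBall (0 : E) R := mem_closedBall_zero_iff.mpr hm_lt.le
  have hfm : f m ≤ f θ₁ := by
    have h := hf.2 h₁ h₂ (by norm_num : (0 : ℝ) ≤ 1 / 2) (by norm_num : (0 : ℝ) ≤ 1 / 2)
      (by norm_num)
    rw [← smul_add] at h
    have h21 : f θ₂ ≤ f θ₁ := hmin₂ h₁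
    simp only [smul_eq_mul] at h
    linarith
  have hminm : IsMinOn f (closedBall 0 R) m := fun z hz => hfm.trans (hmin₁ hz)
  exact hm_lt.ne (hsphere m hm hminm)

end ClosedBall

section EmpiricalRisk

variable {ι E : Type*} [Fintype ι] [NormedAddCommGroup E] [InnerProductSpace ℝ E]

def empiricalRisk (q y : ι → ℝ) (x : ι → E) (φ : ℝ → ℝ) (θ : E) : ℝ :=
  ∑ i, q i * φ (y i * ⟪θ, x i⟫)

variable {q y : ι → ℝ} {x : ι → E} {φ : ℝ → ℝ}

theorem convexOn_empiricalRisk (hq : ∀ i, 0 ≤ q i) (hφ : ConvexOn ℝ univ φ) :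
    ConvexOn ℝ univ (empiricalRisk q y x φ) := by
  refine ⟨convex_univ, fun θ _ θ' _ a b ha hb hab => ?_⟩
  simp only [empiricalRisk, smul_eq_mul, Finset.mul_sum]
  rw [← Finset.sum_add_distrib]
  refine Finset.sum_le_sum fun i _ => ?_
  have hmargin :
      y i * ⟪a • θ + b • θ', x i⟫ = a * (y i * ⟪θ, x i⟫) + b * (y i * ⟪θ', x i⟫) := by
    rw [inner_add_left, real_inner_smul_left, real_inner_smul_left]; ring
  have hconv := hφ.2 (mem_univ (y i * ⟪θ, x i⟫)) (mem_univ (y i * ⟪θ', x i⟫)) ha hb hab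
  simp only [smul_eq_mul] at hconv
  rw [hmargin]
  nlinarith [mul_le_mul_of_nonneg_left hconv (hq i)]

theorem margin_pos_of_empiricalRisk_lt_iInf (hq : ∀ i, 0 < q i) (hφpos : ∀ t, 0 < φ t)
    (hφ : Antitone φ) {θ : E} (hlt : empiricalRisk q y x φ θ < ⨅ i, q i * φ 0) (i : ι) :
    0 < y i * ⟪θ, x i⟫ := by
  have hterm : q i * φ (y i * ⟪θ, x i⟫) ≤ empiricalRisk q y x φ θ :=
    Finset.single_le_sum (f := fun j => q j * φ (y j * ⟪θ, x j⟫))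
      (fun j _ => (mul_pos (hq j) (hφpos _)).le) (Finset.mem_univ i)
  have hinf : ⨅ j, q j * φ 0 ≤ q i * φ 0 := ciInf_le (Finite.bddBelow_range _) i
  have hφlt : φ (y i * ⟪θ, x i⟫) < φ 0 :=
    lt_of_mul_lt_mul_left (hterm.trans_lt (hlt.trans_le hinf)) (hq i).le
  by_contra! hle
  exact (hφ hle).not_gt hφlt

theorem empiricalRisk_smul_lt [Nonempty ι] (hq : ∀ i, 0 < q i) (hφ : StrictAnti φ) {θ : E}
    (hmargin : ∀ i, 0 < y i * ⟪θ, x i⟫) {c : ℝ} (hc : 1 < c) :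
    empiricalRisk q y x φ (c • θ) < empiricalRisk q y x φ θ := by
  refine Finset.sum_lt_sum_of_nonempty Finset.univ_nonempty fun i _ => ?_
  refine mul_lt_mul_of_pos_left (hφ ?_) (hq i)
  rw [real_inner_smul_left, mul_left_comm]
  exact lt_mul_of_one_lt_left (hmargin i) hc

theorem norm_eq_of_isMinOn_empiricalRisk [Nonempty ι] (hq : ∀ i, 0 < q i)
    (hφpos : ∀ t, 0 < φ t) (hφ : StrictAnti φ) {R : ℝ} {θ : E} (hθ : θ ∈ closedBall (0 : E) R)
    (hmin : IsMinOn (empiricalRisk q y x φ) (closedBall 0 R) θ)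
    (hlt : empiricalRisk q y x φ θ < ⨅ i, q i * φ 0) : ‖θ‖ = R := by
  have hmargin := margin_pos_of_empiricalRisk_lt_iInf hq hφpos hφ.antitone hlt
  have hθ0 : θ ≠ 0 := by
    rintro rfl
    simpa using hmargin (Classical.arbitrary ι)
  exact norm_eq_of_isMinOn_closedBall_of_smul_lt hθ hmin hθ0
    fun c hc => empiricalRisk_smul_lt hq hφ hmargin hc

end EmpiricalRisk

theorem stmt_9_general {d n : ℕ} (hn : 0 < n)
    (x : Fin n → EuclideanSpace ℝ (Fin d))
    (y : Fin n → ℝ)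
    (φ : ℝ → ℝ)
    (hφpos : ∀ t : ℝ, 0 < φ t)
    (hφconv : ConvexOn ℝ Set.univ φ)
    (hφanti : StrictAnti φ)
    (q : Fin n → ℝ) (hq0 : ∀ i, 0 < q i)
    (R : ℝ)
    (hlow : ∃ θ : EuclideanSpace ℝ (Fin d), ‖θ‖ ≤ R ∧
      (∑ i, q i * φ (y i * ⟪θ, x i⟫)) < ⨅ i, q i * φ 0)
    (θ₁ θ₂ : EuclideanSpace ℝ (Fin d))
    (h₁ : ‖θ₁‖ ≤ R ∧ ∀ θ : EuclideanSpace ℝ (Fin d), ‖θ‖ ≤ R →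
      (∑ i, q i * φ (y i * ⟪θ₁, x i⟫)) ≤ ∑ i, q i * φ (y i * ⟪θ, x i⟫))
    (h₂ : ‖θ₂‖ ≤ R ∧ ∀ θ : EuclideanSpace ℝ (Fin d), ‖θ‖ ≤ R →
      (∑ i, q i * φ (y i * ⟪θ₂, x i⟫)) ≤ ∑ i, q i * φ (y i * ⟪θ, x i⟫)) :
    θ₁ = θ₂ := by
  have : Nonempty (Fin n) := ⟨⟨0, hn⟩⟩
  obtain ⟨θ₀, hθ₀, hθ₀_lt⟩ := hlow
  have isMinOn_of {θ : EuclideanSpace ℝ (Fin d)} (h : ∀ θ' : EuclideanSpace ℝ (Fin d),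
      ‖θ'‖ ≤ R → empiricalRisk q y x φ θ ≤ empiricalRisk q y x φ θ') :
      IsMinOn (empiricalRisk q y x φ) (closedBall 0 R) θ :=
    fun θ' hθ' => h θ' (mem_closedBall_zero_iff.mp hθ')
  have hconvex : ConvexOn ℝ (closedBall 0 R) (empiricalRisk q y x φ) :=
    (convexOn_empiricalRisk (fun i => (hq0 i).le) hφconv).subset (subset_univ _)
      (convex_closedBall 0 R)
  refine eq_of_isMinOn_closedBall_of_norm_eq hconvex (fun θ hθ hmin => ?_)
    (mem_closedBall_zero_iff.mpr h₁.1) (isMinOn_of h₁.2)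
    (mem_closedBall_zero_iff.mpr h₂.1) (isMinOn_of h₂.2)
  exact norm_eq_of_isMinOn_empiricalRisk hq0 hφpos hφanti hθ hmin
    ((hmin (mem_closedBall_zero_iff.mpr hθ₀)).trans_lt hθ₀_lt)

/-- For positive weights summing to one and a positive, convex,
differentiable, strictly decreasing loss `φ`, if the minimum of
`F(θ) = Σᵢ qᵢ φ(yᵢ⟨θ,xᵢ⟩)` over the closed ball of radius `R` is below
`minᵢ qᵢ φ(0)`, then the minimizer of `F` over that ball is unique. -/
theorem stmt_9 {d n : ℕ} (hn : 0 < n)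
    (x : Fin n → EuclideanSpace ℝ (Fin d)) (hx : ∀ i, ‖x i‖ ≤ 1)
    (y : Fin n → ℝ) (hy : ∀ i, y i = 1 ∨ y i = -1)
    (φ : ℝ → ℝ)
    (hφpos : ∀ t : ℝ, 0 < φ t)
    (hφconv : ConvexOn ℝ Set.univ φ)
    (hφdiff : Differentiable ℝ φ)
    (hφanti : StrictAnti φ)
    (q : Fin n → ℝ) (hq0 : ∀ i, 0 < q i) (hq1 : ∑ i, q i = 1)
    (R : ℝ) (hR : 0 < R)
    (hlow : ∃ θ : EuclideanSpace ℝ (Fin d), ‖θ‖ ≤ R ∧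
      (∑ i, q i * φ (y i * ⟪θ, x i⟫)) < ⨅ i, q i * φ 0)
    (θ₁ θ₂ : EuclideanSpace ℝ (Fin d))
    (h₁ : ‖θ₁‖ ≤ R ∧ ∀ θ : EuclideanSpace ℝ (Fin d), ‖θ‖ ≤ R →
      (∑ i, q i * φ (y i * ⟪θ₁, x i⟫)) ≤ ∑ i, q i * φ (y i * ⟪θ, x i⟫))
    (h₂ : ‖θ₂‖ ≤ R ∧ ∀ θ : EuclideanSpace ℝ (Fin d), ‖θ‖ ≤ R →
      (∑ i, q i * φ (y i * ⟪θ₂, x i⟫)) ≤ ∑ i, q i * φ (y i * ⟪θ, x i⟫)) :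
    θ₁ = θ₂ :=
  stmt_9_general hn x y φ hφpos hφconv hφanti q hq0 R hlow θ₁ θ₂ h₁ h₂
end

section
/- Let q₁,…,qₙ > 0 with Σᵢ qᵢ = 1, suppose x₁,…,xₙ are linearly independent, and define the weighted logistic risk F(θ) = Σᵢ qᵢ log(1+exp(−yᵢ⟨θ,xᵢ⟩)). Let u be the unique max-margin classifier. Then lim_{R→∞} θ_R / R = u, in the sense that for every ε > 0 there exists R(ε) > 0 such that for every R ≥ R(ε), every minimizer θ_R of F over the closed ball {θ : ‖θ‖₂ ≤ R} satisfies ‖θ_R / R − u‖₂ < ε. -/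
/-!
The margin `g v = minᵢ yᵢ⟪v, xᵢ⟫` is positively homogeneous and superadditive, and
`γ = g u > 0` is its maximum on the unit sphere (positivity because linearly independent data
can be interpolated exactly). Comparing a constrained minimizer `θ_R` with `R • u`, the risk
of `θ_R` is at most `exp (-Rγ)`, while it dominates `q_min · log (1 + exp (-g θ_R))`; hence
`g θ_R ≥ Rγ - log (2 / q_min)`. For `v` in the unit ball, superadditivity gives
`γ ‖u + v‖ ≥ γ + g v`, and the parallelogram law turns this into
`γ ‖v - u‖² ≤ 4 (γ - g v)`. With `v = θ_R / R` this yields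
`‖θ_R / R - u‖² ≤ 4 log (2 / q_min) / (γ R)`.
-/

open scoped RealInnerProductSpace

noncomputable def logisticLoss (t : ℝ) : ℝ := Real.log (1 + Real.exp (-t))

lemma logisticLoss_nonneg (t : ℝ) : 0 ≤ logisticLoss t :=
  Real.log_nonneg (by linarith [Real.exp_pos (-t)])

lemma logisticLoss_antitone : Antitone logisticLoss := fun _ _ h =>
  Real.log_le_log (by positivity) (by gcongr)

lemma logisticLoss_le_exp_neg (t : ℝ) : logisticLoss t ≤ Real.exp (-t) := by
  unfold logisticLoss
  linarith [Real.log_le_sub_one_of_pos (x := 1 + Real.exp (-t)) (by positivity)]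

lemma mul_exp_neg_le_of_mul_logisticLoss_le {m a t : ℝ} (hm : 0 < m) (ha : 2 * a ≤ m)
    (h : m * logisticLoss t ≤ a) : m * Real.exp (-t) ≤ 2 * a := by
  set s := Real.exp (-t)
  have hs : 0 < s := Real.exp_pos _
  have hlog : s / (1 + s) ≤ logisticLoss t := by
    have := Real.one_sub_inv_le_log_of_pos (x := 1 + s) (by positivity)
    rwa [show 1 - (1 + s)⁻¹ = s / (1 + s) by field_simp; ring] at this
  have : m * s ≤ a * (1 + s) := by
    rw [← div_le_iff₀ (by positivity), mul_div_assoc]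
    exact (mul_le_mul_of_nonneg_left hlog hm.le).trans h
  nlinarith

section Margin

variable {ι E : Type*} [NormedAddCommGroup E] [InnerProductSpace ℝ E]
  {x : ι → E} {y : ι → ℝ}

variable (x y) in
noncomputable def margin (v : E) : ℝ := ⨅ i, y i * ⟪v, x i⟫

lemma margin_le [Finite ι] (v : E) (i : ι) : margin x y v ≤ y i * ⟪v, x i⟫ :=
  ciInf_le (Set.finite_range _).bddBelow i

lemma le_margin [Nonempty ι] {v : E} {c : ℝ} (h : ∀ i, c ≤ y i * ⟪v, x i⟫) :
    c ≤ margin x y v :=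
  le_ciInf h

lemma exists_margin_eq [Finite ι] [Nonempty ι] (v : E) : ∃ i, y i * ⟪v, x i⟫ = margin x y v :=
  exists_eq_ciInf_of_finite

lemma margin_smul {c : ℝ} (hc : 0 ≤ c) (v : E) : margin x y (c • v) = c * margin x y v := by
  simp only [margin, Real.mul_iInf_of_nonneg hc, real_inner_smul_left, mul_left_comm]

lemma margin_zero : margin x y (0 : E) = 0 := by
  simpa using margin_smul (x := x) (y := y) le_rfl (0 : E)

lemma margin_add_le_margin_add [Finite ι] [Nonempty ι] (v w : E) :
    margin x y v + margin x y w ≤ margin x y (v + w) :=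
  le_margin fun i => by
    rw [inner_add_left, mul_add]
    exact add_le_add (margin_le v i) (margin_le w i)

lemma margin_le_norm_mul {u : E} (hmax : ∀ v : E, ‖v‖ = 1 → margin x y v ≤ margin x y u)
    (v : E) : margin x y v ≤ ‖v‖ * margin x y u := by
  rcases eq_or_ne v 0 with rfl | hv
  · simp [margin_zero]
  have hnv : 0 < ‖v‖ := norm_pos_iff.mpr hv
  calc margin x y v = ‖v‖ * margin x y (‖v‖⁻¹ • v) := by
        rw [margin_smul (inv_nonneg.mpr hnv.le), mul_inv_cancel_left₀ hnv.ne']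
    _ ≤ ‖v‖ * margin x y u := by
        gcongr
        exact hmax _ (by rw [norm_smul, norm_inv, norm_norm, inv_mul_cancel₀ hnv.ne'])

lemma exists_inner_eq_of_linearIndependent [Finite ι] (hx : LinearIndependent ℝ x)
    (c : ι → ℝ) : ∃ θ : E, ∀ i, ⟪θ, x i⟫ = c i := by
  let K := Submodule.span ℝ (Set.range x)
  have : FiniteDimensional ℝ K := FiniteDimensional.span_of_finite ℝ (Set.finite_range x)
  let b := Module.Basis.span hx
  let f : StrongDual ℝ K := LinearMap.toContinuousLinearMap (b.constr ℝ c)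
  refine ⟨((InnerProductSpace.toDual ℝ K).symm f : K), fun i => ?_⟩
  calc _ = f (b i) := by
        rw [← InnerProductSpace.toDual_symm_apply, Module.Basis.span_apply]; rfl
    _ = c i := by simp [f]

lemma exists_margin_pos [Finite ι] [Nonempty ι] (hx : LinearIndependent ℝ x)
    (hy : ∀ i, y i ≠ 0) : ∃ θ : E, 0 < margin x y θ := by
  obtain ⟨θ, hθ⟩ := exists_inner_eq_of_linearIndependent hx y
  obtain ⟨i, hi⟩ := exists_margin_eq (x := x) (y := y) θ
  exact ⟨θ, by rw [← hi, hθ]; exact mul_self_pos.mpr (hy i)⟩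

lemma margin_mul_norm_sub_sq_le [Finite ι] [Nonempty ι] {u v : E} (hu : ‖u‖ = 1)
    (hmax : ∀ v : E, ‖v‖ = 1 → margin x y v ≤ margin x y u) (hγ : 0 ≤ margin x y u)
    (hv : ‖v‖ ≤ 1) : margin x y u * ‖v - u‖ ^ 2 ≤ 4 * (margin x y u - margin x y v) := by
  set γ := margin x y u
  set t := margin x y v
  have hsum : γ + t ≤ γ * ‖u + v‖ := by
    calc γ + t ≤ margin x y (u + v) := margin_add_le_margin_add u v
      _ ≤ ‖u + v‖ * γ := margin_le_norm_mul hmax _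
      _ = γ * ‖u + v‖ := mul_comm _ _
  have ht : t ≤ γ := (margin_le_norm_mul hmax v).trans (by nlinarith)
  have hpar : ‖v - u‖ ^ 2 + ‖u + v‖ ^ 2 ≤ 4 := by
    rw [norm_sub_sq_real, norm_add_sq_real, real_inner_comm, hu]
    nlinarith [norm_nonneg v]
  nlinarith [norm_nonneg (u + v)]

variable (x y) in
noncomputable def logisticRisk [Fintype ι] (q : ι → ℝ) (θ : E) : ℝ :=
  ∑ i, q i * logisticLoss (y i * ⟪θ, x i⟫)

lemma logisticRisk_le_logisticLoss_margin [Fintype ι] {q : ι → ℝ} (hq : ∀ i, 0 ≤ q i)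
    (hq1 : ∑ i, q i = 1) (θ : E) : logisticRisk x y q θ ≤ logisticLoss (margin x y θ) :=
  calc logisticRisk x y q θ ≤ ∑ i, q i * logisticLoss (margin x y θ) :=
        Finset.sum_le_sum fun i _ =>
          mul_le_mul_of_nonneg_left (logisticLoss_antitone (margin_le θ i)) (hq i)
    _ = logisticLoss (margin x y θ) := by rw [← Finset.sum_mul, hq1, one_mul]

lemma mul_logisticLoss_margin_le_logisticRisk [Fintype ι] [Nonempty ι] {q : ι → ℝ} {m : ℝ}
    (hq : ∀ i, 0 ≤ q i) (hm : ∀ i, m ≤ q i) (θ : E) :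
    m * logisticLoss (margin x y θ) ≤ logisticRisk x y q θ := by
  obtain ⟨i, hi⟩ := exists_margin_eq (x := x) (y := y) θ
  calc m * logisticLoss (margin x y θ) ≤ q i * logisticLoss (y i * ⟪θ, x i⟫) := by
        rw [hi]; exact mul_le_mul_of_nonneg_right (hm i) (logisticLoss_nonneg _)
    _ ≤ logisticRisk x y q θ :=
        Finset.single_le_sum (f := fun i => q i * logisticLoss (y i * ⟪θ, x i⟫))
          (fun j _ => mul_nonneg (hq j) (logisticLoss_nonneg _)) (Finset.mem_univ i)

lemma sub_log_le_margin_of_logisticRisk_le [Fintype ι] [Nonempty ι] {q : ι → ℝ} {m t : ℝ}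
    (hm0 : 0 < m) (hq : ∀ i, 0 ≤ q i) (hm : ∀ i, m ≤ q i) (ht : Real.log (2 / m) ≤ t) {θ : E}
    (hθ : logisticRisk x y q θ ≤ Real.exp (-t)) : t - Real.log (2 / m) ≤ margin x y θ := by
  have hsmall : 2 * Real.exp (-t) ≤ m :=
    calc 2 * Real.exp (-t) ≤ 2 * Real.exp (-Real.log (2 / m)) := by gcongr
      _ = m := by rw [Real.exp_neg, Real.exp_log (by positivity)]; field_simp
  have h := mul_exp_neg_le_of_mul_logisticLoss_le hm0 hsmall
    ((mul_logisticLoss_margin_le_logisticRisk hq hm θ).trans hθ)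
  have h := Real.log_le_log (by positivity) h
  rw [Real.log_mul hm0.ne' (Real.exp_pos _).ne', Real.log_mul two_ne_zero (Real.exp_pos _).ne',
    Real.log_exp, Real.log_exp] at h
  rw [Real.log_div two_ne_zero hm0.ne']
  linarith

lemma mul_margin_mul_norm_inv_smul_sub_sq_le [Fintype ι] [Nonempty ι] {q : ι → ℝ} {m R : ℝ}
    (hm0 : 0 < m) (hq : ∀ i, 0 ≤ q i) (hm : ∀ i, m ≤ q i) (hq1 : ∑ i, q i = 1) {u θ : E}
    (hu : ‖u‖ = 1) (hmax : ∀ v : E, ‖v‖ = 1 → margin x y v ≤ margin x y u)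
    (hγ : 0 ≤ margin x y u) (hR0 : 0 < R) (hR : Real.log (2 / m) ≤ R * margin x y u)
    (hθ : ‖θ‖ ≤ R) (hmin : logisticRisk x y q θ ≤ logisticRisk x y q (R • u)) :
    R * (margin x y u * ‖R⁻¹ • θ - u‖ ^ 2) ≤ 4 * Real.log (2 / m) := by
  have hRu : logisticRisk x y q (R • u) ≤ Real.exp (-(R * margin x y u)) := by
    have := logisticRisk_le_logisticLoss_margin (x := x) (y := y) hq hq1 (R • u)
    rw [margin_smul hR0.le] at this
    exact this.trans (logisticLoss_le_exp_neg _)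
  have hθmargin := sub_log_le_margin_of_logisticRisk_le hm0 hq hm hR (hmin.trans hRu)
  have hv : ‖R⁻¹ • θ‖ ≤ 1 := by
    rw [norm_smul, norm_inv, Real.norm_of_nonneg hR0.le, inv_mul_le_one₀ hR0]
    exact hθ
  have hstab := margin_mul_norm_sub_sq_le hu hmax hγ hv
  rw [margin_smul (inv_nonneg.mpr hR0.le)] at hstab
  calc R * (margin x y u * ‖R⁻¹ • θ - u‖ ^ 2)
      ≤ R * (4 * (margin x y u - R⁻¹ * margin x y θ)) := by gcongr
    _ = 4 * (R * margin x y u - margin x y θ) := by field_simp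
    _ ≤ 4 * Real.log (2 / m) := by linarith

end Margin

/-- For positive weights summing to one, linearly independent
data, the weighted logistic risk `F(θ) = Σᵢ qᵢ log(1+exp(−yᵢ⟨θ,xᵢ⟩))`, and the
unique max-margin classifier `u`: for every `ε > 0` there is `R(ε) > 0` such
that for all `R ≥ R(ε)`, every minimizer `θ_R` of `F` over the closed ball of
radius `R` satisfies `‖θ_R/R − u‖ < ε`. -/
theorem stmt_11 {d n : ℕ} (hn : 0 < n)
    (x : Fin n → EuclideanSpace ℝ (Fin d))
    (y : Fin n → ℝ) (hy : ∀ i, y i = 1 ∨ y i = -1)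
    (hli : LinearIndependent ℝ x)
    (q : Fin n → ℝ) (hq0 : ∀ i, 0 < q i) (hq1 : ∑ i, q i = 1)
    (u : EuclideanSpace ℝ (Fin d)) (hu : ‖u‖ = 1)
    (humax : ∀ v : EuclideanSpace ℝ (Fin d), ‖v‖ = 1 →
      (⨅ i, y i * ⟪v, x i⟫) ≤ ⨅ i, y i * ⟪u, x i⟫) :
    ∀ ε > (0 : ℝ), ∃ Rε > (0 : ℝ), ∀ R : ℝ, Rε ≤ R →
      ∀ θR : EuclideanSpace ℝ (Fin d),
        (‖θR‖ ≤ R ∧ ∀ θ : EuclideanSpace ℝ (Fin d), ‖θ‖ ≤ R →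
          (∑ i, q i * Real.log (1 + Real.exp (-(y i * ⟪θR, x i⟫))))
            ≤ ∑ i, q i * Real.log (1 + Real.exp (-(y i * ⟪θ, x i⟫)))) →
        ‖R⁻¹ • θR - u‖ < ε := by
  have : Nonempty (Fin n) := ⟨⟨0, hn⟩⟩
  have hmax : ∀ v, ‖v‖ = 1 → margin x y v ≤ margin x y u := humax
  obtain ⟨θ₀, hθ₀⟩ := exists_margin_pos (y := y) hli fun i => by
    rcases hy i with h | h <;> simp [h]
  have hγ : 0 < margin x y u :=
    pos_of_mul_pos_right (hθ₀.trans_le (margin_le_norm_mul hmax θ₀)) (norm_nonneg _)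
  obtain ⟨i₀, hi₀⟩ := Finite.exists_min q
  have hK : 0 < Real.log (2 / q i₀) := by
    have := hq1 ▸ Finset.single_le_sum (fun i _ => (hq0 i).le) (Finset.mem_univ i₀)
    exact Real.log_pos (by rw [lt_div_iff₀ (hq0 i₀)]; linarith)
  intro ε hε
  refine ⟨Real.log (2 / q i₀) / margin x y u * (1 + 4 / ε ^ 2), by positivity,
    fun R hR θR ⟨hθR, hmin⟩ => ?_⟩
  have hRγ : Real.log (2 / q i₀) * (1 + 4 / ε ^ 2) ≤ R * margin x y u := by
    rwa [div_mul_eq_mul_div, div_le_iff₀ hγ] at hR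
  have hR0 : 0 < R := by nlinarith [show 0 < 4 / ε ^ 2 by positivity]
  have hbound := mul_margin_mul_norm_inv_smul_sub_sq_le (hq0 i₀) (fun i => (hq0 i).le) hi₀ hq1
    hu hmax hγ.le hR0 (by nlinarith [show 0 < 4 / ε ^ 2 by positivity]) hθR
    (hmin _ (by rw [norm_smul, hu, mul_one, Real.norm_of_nonneg hR0.le]))
  have hgap : 4 * Real.log (2 / q i₀) < R * margin x y u * ε ^ 2 :=
    calc 4 * Real.log (2 / q i₀) < Real.log (2 / q i₀) * (1 + 4 / ε ^ 2) * ε ^ 2 := by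
          field_simp; nlinarith [pow_pos hε 2]
      _ ≤ R * margin x y u * ε ^ 2 := by gcongr
  refine lt_of_pow_lt_pow_left₀ 2 hε.le ?_
  nlinarith [mul_pos hR0 hγ]
end
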